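/- arXiv:1108.5419 — 8 statements merged into one kernel-verified Lean document; each statement's English description precedes it below -/
import Mathlib

section
/- If g(z) = z + g₂z² + g₃z³ + ⋯ is analytic on the unit disk and starlike of order 1/2 (i.e., Re(zg'(z)/g(z)) > 1/2 on the disk), then |g₃ - g₂²/2| ≤ 1/2. -/
/-!
Write `p(z) = z g'(z) / g(z) = 1 + p₁ z + p₂ z² + ⋯`. Comparing coefficients in
`p(z) · g(z)/z = g'(z)` gives `p₂ = 2 g₃ - g₂²`, so the claim is `|p₂| ≤ 1` for a function with
`p(0) = 1` and `Re p > 1/2`. The even part `P(z) = (p(z) + p(-z))/2` has the same properties,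
`P'(0) = 0` and `P''(0) = p''(0)`. Since `Re P > 1/2` means `|P - 1| < |P|`, the function
`w = (P - 1)/P` maps the disk into itself with `w(0) = w'(0) = 0`, and Schwarz's lemma applied to
`w(z)/z` gives `|w''(0)| ≤ 2`; finally `w''(0) = P''(0)`.
-/

open Complex Metric Filter Topology Set

section IteratedDeriv

variable {𝕜 : Type*} [NontriviallyNormedField 𝕜] {f h : 𝕜 → 𝕜} {c : 𝕜}

theorem iteratedDeriv_dslope [CompleteSpace 𝕜] [CharZero 𝕜] (hf : AnalyticAt 𝕜 f c) (n : ℕ) :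
    iteratedDeriv n (dslope f c) c = iteratedDeriv (n + 1) f c / (n + 1) := by
  have hs := hf.hasFPowerSeriesAt.has_fpower_series_dslope_fslope
  have hcoeff :=
    congrArg (·.coeff n) (hs.eq_formalMultilinearSeries hs.analyticAt.hasFPowerSeriesAt)
  simp only [FormalMultilinearSeries.coeff_fslope, FormalMultilinearSeries.coeff_ofScalars,
    Nat.factorial_succ, Nat.cast_mul] at hcoeff
  have : (n.factorial : 𝕜) ≠ 0 := Nat.cast_ne_zero.mpr n.factorial_ne_zero
  have : (n : 𝕜) + 1 ≠ 0 := by norm_cast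
  field_simp at hcoeff ⊢
  push_cast at hcoeff
  linear_combination -hcoeff

theorem iteratedDeriv_two_mul (hf : ContDiffAt 𝕜 2 f c) (hh : ContDiffAt 𝕜 2 h c) :
    iteratedDeriv 2 (fun z => f z * h z) c =
      iteratedDeriv 2 f c * h c + 2 * (deriv f c * deriv h c) + f c * iteratedDeriv 2 h c := by
  rw [iteratedDeriv_fun_mul hf hh]
  simp [Finset.sum_range_succ]
  ring

theorem iteratedDeriv_two_div (hf : ContDiffAt 𝕜 2 f c) (hh : ContDiffAt 𝕜 2 h c)
    (hc : h c ≠ 0) :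
    iteratedDeriv 2 (fun z => f z / h z) c * h c =
      iteratedDeriv 2 f c - 2 * (deriv (fun z => f z / h z) c * deriv h c)
        - f c / h c * iteratedDeriv 2 h c := by
  have hprod : (fun z => f z / h z * h z) =ᶠ[𝓝 c] f := by
    filter_upwards [hh.continuousAt.eventually_ne hc] with z hz
    exact div_mul_cancel₀ _ hz
  have hq : ContDiffAt 𝕜 2 (fun z => f z / h z) c := hf.div hh hc
  rw [← hprod.iteratedDeriv_eq, iteratedDeriv_two_mul hq hh]
  ring

theorem iteratedDeriv_two_deriv_div_dslope [CompleteSpace 𝕜] [CharZero 𝕜] {g : 𝕜 → 𝕜}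
    (hg : AnalyticAt 𝕜 g c) (hg1 : deriv g c = 1) :
    iteratedDeriv 2 (fun z => deriv g z / dslope g c z) c / 2 =
      2 * (iteratedDeriv 3 g c / 6) - (iteratedDeriv 2 g c / 2) ^ 2 := by
  have hφ : AnalyticAt 𝕜 (dslope g c) c :=
    hg.hasFPowerSeriesAt.has_fpower_series_dslope_fslope.analyticAt
  have hφ0 : dslope g c c = 1 := by rw [dslope_same, hg1]
  have hφ1 : deriv (dslope g c) c = iteratedDeriv 2 g c / 2 := by
    rw [← iteratedDeriv_one, iteratedDeriv_dslope hg]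
    norm_num
  have hφ2 : iteratedDeriv 2 (dslope g c) c = iteratedDeriv 3 g c / 3 := by
    rw [iteratedDeriv_dslope hg]
    norm_num
  have hg2 : deriv (deriv g) c = iteratedDeriv 2 g c := by
    rw [iteratedDeriv_succ, iteratedDeriv_one]
  have hg3 : iteratedDeriv 2 (deriv g) c = iteratedDeriv 3 g c := by
    rw [← iteratedDeriv_succ']
  have hp1 : deriv (fun z => deriv g z / dslope g c z) c = iteratedDeriv 2 g c / 2 := by
    rw [deriv_fun_div hg.deriv.differentiableAt hφ.differentiableAt (hφ0 ▸ one_ne_zero), hφ0,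
      hφ1, hg1, hg2]
    ring
  have hp2 := iteratedDeriv_two_div hg.deriv.contDiffAt hφ.contDiffAt (hφ0 ▸ one_ne_zero)
  rw [hp1, hφ0, hφ1, hφ2, hg1, hg3] at hp2
  linear_combination hp2 / 2

theorem Function.Even.deriv_eq_zero_at_zero [CharZero 𝕜] (hf : Function.Even f) :
    deriv f 0 = 0 := by
  have h := deriv_comp_neg f 0
  rw [funext hf, neg_zero] at h
  exact self_eq_neg.mp h

theorem iteratedDeriv_even_part_of_even [CharZero 𝕜] {n : ℕ} (hn : Even n)
    (hf : ContDiffAt 𝕜 n f 0) :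
    iteratedDeriv n (fun z => (f z + f (-z)) / 2) 0 = iteratedDeriv n f 0 := by
  have hneg : ContDiffAt 𝕜 n (fun z => f (-z)) 0 :=
    ContDiffAt.comp (g := f) 0 (by rwa [neg_zero]) contDiffAt_id.neg
  rw [iteratedDeriv_div_const, iteratedDeriv_fun_add hf hneg, iteratedDeriv_comp_neg, neg_zero,
    hn.neg_one_pow, one_smul, add_self_div_two]

end IteratedDeriv

theorem norm_sub_one_div_self_lt_one {z : ℂ} (hz : 1 / 2 < z.re) : ‖(z - 1) / z‖ < 1 := by
  have hz0 : z ≠ 0 := by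
    rintro rfl
    norm_num at hz
  rw [norm_div, div_lt_one (norm_pos_iff.mpr hz0)]
  refine lt_of_pow_lt_pow_left₀ 2 (norm_nonneg _) ?_
  rw [Complex.sq_norm, Complex.sq_norm, normSq_apply, normSq_apply, sub_re, sub_im, one_re,
    one_im]
  nlinarith

theorem norm_iteratedDeriv_two_le_of_mapsTo_ball {f : ℂ → ℂ} {c : ℂ} {R₁ R₂ : ℝ}
    (hd : DifferentiableOn ℂ f (ball c R₁)) (h_maps : MapsTo f (ball c R₁) (closedBall (f c) R₂))
    (hf' : deriv f c = 0) (hR₁ : 0 < R₁) : ‖iteratedDeriv 2 f c‖ ≤ 2 * R₂ / R₁ ^ 2 := by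
  have hc : ball c R₁ ∈ 𝓝 c := ball_mem_nhds c hR₁
  have hslope_maps : MapsTo (dslope f c) (ball c R₁) (closedBall (dslope f c c) (R₂ / R₁)) := by
    intro z hz
    rw [dslope_same, hf', mem_closedBall_zero_iff]
    exact Complex.norm_dslope_le_div_of_mapsTo_ball hd h_maps hz
  calc ‖iteratedDeriv 2 f c‖ = 2 * ‖deriv (dslope f c) c‖ := by
        rw [← iteratedDeriv_one, iteratedDeriv_dslope (hd.analyticAt hc), norm_div]
        norm_num
        ring
    _ ≤ 2 * (R₂ / R₁ / R₁) := by
        gcongr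
        exact Complex.norm_deriv_le_div_of_mapsTo_ball ((differentiableOn_dslope hc).2 hd)
          hslope_maps hR₁
    _ = 2 * R₂ / R₁ ^ 2 := by ring

theorem norm_iteratedDeriv_two_le_of_one_half_lt_re_of_deriv_eq_zero {P : ℂ → ℂ}
    (hd : DifferentiableOn ℂ P (ball 0 1)) (hP0 : P 0 = 1) (hP1 : deriv P 0 = 0)
    (hre : ∀ z ∈ ball (0 : ℂ) 1, 1 / 2 < (P z).re) :
    ‖iteratedDeriv 2 P 0‖ ≤ 2 := by
  have hPc : ContDiffAt ℂ 2 P 0 := (hd.analyticAt (ball_mem_nhds 0 one_pos)).contDiffAt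
  have hPne : ∀ z ∈ ball (0 : ℂ) 1, P z ≠ 0 := fun z hz h0 => by
    have := hre z hz
    norm_num [h0] at this
  set w : ℂ → ℂ := fun z => (P z - 1) / P z
  have hw_maps : MapsTo w (ball 0 1) (closedBall (w 0) 1) := by
    intro z hz
    rw [show w 0 = 0 by simp [w, hP0], mem_closedBall_zero_iff]
    exact (norm_sub_one_div_self_lt_one (hre z hz)).le
  have hw1 : deriv w 0 = 0 := by
    have hPd0 : DifferentiableAt ℂ P 0 := hPc.differentiableAt two_ne_zero
    rw [deriv_fun_div (hPd0.sub_const 1) hPd0 (hP0 ▸ one_ne_zero)]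
    simp [hP0, hP1]
  have hw2 : iteratedDeriv 2 w 0 = iteratedDeriv 2 P 0 := by
    have h := iteratedDeriv_two_div (hPc.sub (contDiffAt_const (c := (1 : ℂ)))) hPc
      (hP0 ▸ one_ne_zero)
    rw [iteratedDeriv_fun_sub hPc contDiffAt_const, iteratedDeriv_const, hP0] at h
    simp only [w] at hw1 ⊢
    simpa [hw1] using h
  have hbound := norm_iteratedDeriv_two_le_of_mapsTo_ball (f := w)
    ((hd.sub_const 1).div hd hPne) hw_maps hw1 one_pos
  rw [hw2] at hbound
  norm_num at hbound
  exact hbound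

theorem norm_iteratedDeriv_two_le_of_one_half_lt_re {p : ℂ → ℂ}
    (hd : DifferentiableOn ℂ p (ball 0 1)) (hp0 : p 0 = 1)
    (hre : ∀ z ∈ ball (0 : ℂ) 1, 1 / 2 < (p z).re) :
    ‖iteratedDeriv 2 p 0‖ ≤ 2 := by
  have hneg : MapsTo (fun z => -z) (ball (0 : ℂ) 1) (ball 0 1) := fun z hz => by
    simpa [mem_ball_zero_iff] using hz
  set P : ℂ → ℂ := fun z => (p z + p (-z)) / 2
  have hPre : ∀ z ∈ ball (0 : ℂ) 1, 1 / 2 < (P z).re := by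
    intro z hz
    have h₁ := hre z hz
    have h₂ := hre (-z) (hneg hz)
    simp only [P, div_ofNat_re, add_re]
    linarith
  have hPd : DifferentiableOn ℂ P (ball 0 1) :=
    (hd.add (hd.comp (differentiableOn_neg _) hneg)).div_const 2
  have hP2 : iteratedDeriv 2 P 0 = iteratedDeriv 2 p 0 :=
    iteratedDeriv_even_part_of_even even_two
      (hd.analyticAt (ball_mem_nhds 0 one_pos)).contDiffAt
  rw [← hP2]
  exact norm_iteratedDeriv_two_le_of_one_half_lt_re_of_deriv_eq_zero hPd (by simp [P, hp0])
    (Function.Even.deriv_eq_zero_at_zero fun z => by simp [P, add_comm]) hPre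

theorem starlike_half_coeff_bound (g : ℂ → ℂ)
    (hg : AnalyticOnNhd ℂ g (ball (0:ℂ) 1))
    (hg0 : g 0 = 0) (hg1 : deriv g 0 = 1)
    (hstar : ∀ z ∈ ball (0:ℂ) 1, z ≠ 0 → 1 / 2 < (z * deriv g z / g z).re)
    (g₂ g₃ : ℂ)
    (hg₂ : g₂ = iteratedDeriv 2 g 0 / 2)
    (hg₃ : g₃ = iteratedDeriv 3 g 0 / 6) :
    ‖g₃ - g₂ ^ 2 / 2‖ ≤ 1 / 2 := by
  -- `p z = z g'(z) / g(z)`, with the removable singularity at `0` filled in by `dslope`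
  set p : ℂ → ℂ := fun z => deriv g z / dslope g 0 z
  have hp0 : p 0 = 1 := by simp [p, hg1]
  have hre : ∀ z ∈ ball (0 : ℂ) 1, 1 / 2 < (p z).re := by
    intro z hz
    rcases eq_or_ne z 0 with rfl | hz0
    · norm_num [hp0]
    · convert hstar z hz hz0 using 2
      show deriv g z / dslope g 0 z = _
      rw [dslope_of_ne _ hz0, slope_def_field, hg0, sub_zero, sub_zero, div_div_eq_mul_div,
        mul_comm]
  have hslope_ne : ∀ z ∈ ball (0 : ℂ) 1, dslope g 0 z ≠ 0 := fun z hz h0 => by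
    have := hre z hz
    norm_num [p, h0] at this
  have hpd : DifferentiableOn ℂ p (ball 0 1) :=
    hg.deriv.differentiableOn.div
      ((differentiableOn_dslope (ball_mem_nhds 0 one_pos)).2 hg.differentiableOn) hslope_ne
  have hp2 := iteratedDeriv_two_deriv_div_dslope (hg 0 (mem_ball_self one_pos)) hg1
  rw [← hg₂, ← hg₃] at hp2
  calc ‖g₃ - g₂ ^ 2 / 2‖ = ‖iteratedDeriv 2 p 0‖ / 4 := by
        rw [show g₃ - g₂ ^ 2 / 2 = iteratedDeriv 2 p 0 / 4 by linear_combination -hp2 / 2,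
          norm_div]
        norm_num
    _ ≤ 1 / 2 := by linarith [norm_iteratedDeriv_two_le_of_one_half_lt_re hpd hp0 hre]
end

section
/- If g is starlike of order 1/2 on the unit disk (normalized: g(0)=0, g'(0)=1, Re(zg'(z)/g(z)) > 1/2), then the function G(z) = -g(z)g(-z)/z (with G(0)=0) is an odd starlike function on the unit disk, i.e., G(-z) = -G(z) and Re(zG'(z)/G(z)) > 0 for z ≠ 0. -/
open Complex Metric Filter Topology

/-!
Away from `0`, `G(z) = g(z) · g(-z)/(-z)`, so the logarithmic derivatives add up:
`z G'(z)/G(z) = z g'(z)/g(z) + (-z) g'(-z)/g(-z) - 1`, and each of the two quotients has real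
part `> 1/2`. Analyticity at `0` comes from writing `G(z) = g(z) · (dslope g 0)(-z)`.
-/

theorem neg_mem_ball_zero {E : Type*} [SeminormedAddCommGroup E] {r : ℝ} {x : E}
    (hx : x ∈ ball (0 : E) r) : -x ∈ ball (0 : E) r := by
  simpa using hx

theorem analyticOnNhd_mul_dslope_comp_neg {g : ℂ → ℂ} {r : ℝ}
    (hg : AnalyticOnNhd ℂ g (ball (0 : ℂ) r)) :
    AnalyticOnNhd ℂ (fun z => g z * dslope g 0 (-z)) (ball (0 : ℂ) r) := by
  rcases le_or_gt r 0 with hr | hr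
  · simp [ball_eq_empty.2 hr]
  have hds : DifferentiableOn ℂ (dslope g 0) (ball (0 : ℂ) r) :=
    (differentiableOn_dslope (ball_mem_nhds 0 hr)).2 hg.differentiableOn
  refine (analyticOnNhd_iff_differentiableOn isOpen_ball).2 ?_
  exact hg.differentiableOn.mul <|
    hds.comp (differentiableOn_neg _) fun z hz => neg_mem_ball_zero hz

theorem eq_mul_dslope_comp_neg {g G : ℂ → ℂ} (hg0 : g 0 = 0)
    (hG : ∀ z : ℂ, z ≠ 0 → G z = -(g z * g (-z)) / z) (hG0 : G 0 = 0) :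
    G = fun z => g z * dslope g 0 (-z) := by
  funext z
  rcases eq_or_ne z 0 with rfl | hz
  · simp [hG0, hg0]
  · rw [hG z hz, dslope_of_ne _ (neg_ne_zero.2 hz), slope_def_field, hg0, sub_zero, sub_zero]
    field_simp

theorem odd_of_eq_neg_mul_comp_neg_div {g G : ℂ → ℂ}
    (hG : ∀ z : ℂ, z ≠ 0 → G z = -(g z * g (-z)) / z) (hG0 : G 0 = 0) : Function.Odd G := by
  intro z
  rcases eq_or_ne z 0 with rfl | hz
  · simp [hG0]
  · rw [hG (-z) (neg_ne_zero.2 hz), hG z hz, neg_neg]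
    ring

theorem ne_zero_of_pos_re_div {x y : ℂ} (h : 0 < (x / y).re) : y ≠ 0 := by
  rintro rfl
  simp at h

theorem logDeriv_neg_mul_comp_neg_div {g : ℂ → ℂ} {z : ℂ} (hz : z ≠ 0)
    (hgz : DifferentiableAt ℂ g z) (hgnz : DifferentiableAt ℂ g (-z))
    (hgz_ne : g z ≠ 0) (hgnz_ne : g (-z) ≠ 0) :
    logDeriv (fun w => -(g w * g (-w)) / w) z = logDeriv g z - logDeriv g (-z) - 1 / z := by
  have hneg : DifferentiableAt ℂ (fun w : ℂ => -w) z := differentiableAt_id.neg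
  have hcomp : DifferentiableAt ℂ (g ∘ Neg.neg) z := hgnz.comp z hneg
  have hfun : (fun w => -(g w * g (-w)) / w) = fun w => g w * (g ∘ Neg.neg) w / -w := by
    ext w
    simp [div_neg, neg_div]
  rw [hfun, logDeriv_div (f := fun w => g w * (g ∘ Neg.neg) w) z (mul_ne_zero hgz_ne hgnz_ne)
    (neg_ne_zero.2 hz) (hgz.mul hcomp) hneg, logDeriv_mul z hgz_ne hgnz_ne hgz hcomp,
    logDeriv_comp hgnz hneg]
  simp only [logDeriv_apply, deriv_neg'']
  field_simp
  ring

theorem re_mul_deriv_div_pos_of_neg_mul_comp_neg_div {g G : ℂ → ℂ} {z : ℂ}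
    (hz : z ≠ 0) (hgz : DifferentiableAt ℂ g z) (hgnz : DifferentiableAt ℂ g (-z))
    (hG : G =ᶠ[𝓝 z] fun w => -(g w * g (-w)) / w)
    (hstar : 1 / 2 < (z * deriv g z / g z).re)
    (hstar_neg : 1 / 2 < (-z * deriv g (-z) / g (-z)).re) :
    0 < (z * deriv G z / G z).re := by
  have hgz_ne : g z ≠ 0 := ne_zero_of_pos_re_div (one_half_pos.trans hstar)
  have hgnz_ne : g (-z) ≠ 0 := ne_zero_of_pos_re_div (one_half_pos.trans hstar_neg)
  have key : z * deriv G z / G z = z * deriv g z / g z + -z * deriv g (-z) / g (-z) - 1 := by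
    rw [mul_div_assoc, ← logDeriv_apply, (logDeriv_congr_nhds hG).eq_of_nhds,
      logDeriv_neg_mul_comp_neg_div hz hgz hgnz hgz_ne hgnz_ne]
    simp only [logDeriv_apply]
    field_simp
    ring
  rw [key, sub_re, add_re, one_re]
  linarith

theorem odd_starlike_of_starlike_half_general (g : ℂ → ℂ)
    (hg : AnalyticOnNhd ℂ g (ball (0:ℂ) 1))
    (hg0 : g 0 = 0)
    (hstar : ∀ z ∈ ball (0:ℂ) 1, z ≠ 0 → 1 / 2 < (z * deriv g z / g z).re)
    (G : ℂ → ℂ)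
    (hG : ∀ z : ℂ, z ≠ 0 → G z = -(g z * g (-z)) / z)
    (hG0 : G 0 = 0) :
    AnalyticOnNhd ℂ G (ball (0:ℂ) 1) ∧
    (∀ z ∈ ball (0:ℂ) 1, G (-z) = -G z) ∧
    (∀ z ∈ ball (0:ℂ) 1, z ≠ 0 → 0 < (z * deriv G z / G z).re) := by
  refine ⟨eq_mul_dslope_comp_neg hg0 hG hG0 ▸ analyticOnNhd_mul_dslope_comp_neg hg,
    fun z _ => odd_of_eq_neg_mul_comp_neg_div hG hG0 z, fun z hz hz0 => ?_⟩
  have hnz : -z ∈ ball (0:ℂ) 1 := neg_mem_ball_zero hz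
  exact re_mul_deriv_div_pos_of_neg_mul_comp_neg_div hz0
    (hg z hz).differentiableAt (hg (-z) hnz).differentiableAt
    ((eventually_ne_nhds hz0).mono hG) (hstar z hz hz0) (hstar (-z) hnz (neg_ne_zero.2 hz0))

theorem odd_starlike_of_starlike_half (g : ℂ → ℂ)
    (hg : AnalyticOnNhd ℂ g (ball (0:ℂ) 1))
    (hg0 : g 0 = 0) (hg1 : deriv g 0 = 1)
    (hstar : ∀ z ∈ ball (0:ℂ) 1, z ≠ 0 → 1 / 2 < (z * deriv g z / g z).re)
    (G : ℂ → ℂ)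
    (hG : ∀ z : ℂ, z ≠ 0 → G z = -(g z * g (-z)) / z)
    (hG0 : G 0 = 0) :
    AnalyticOnNhd ℂ G (ball (0:ℂ) 1) ∧
    (∀ z ∈ ball (0:ℂ) 1, G (-z) = -G z) ∧
    (∀ z ∈ ball (0:ℂ) 1, z ≠ 0 → 0 < (z * deriv G z / G z).re) :=
  odd_starlike_of_starlike_half_general g hg hg0 hstar G hG hG0
end

section
/- If G is an odd normalized starlike function on the unit disk (G(0)=0, G'(0)=1, G(-z)=-G(z), Re(zG'(z)/G(z)) > 0), then for |z| = r < 1, r/(1+r²) ≤ |G(z)| ≤ r/(1-r²). -/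
open Complex Metric Set Filter Topology

/-!
Write `G z = z * H z` with `H = dslope G 0`. Then `p = 1 + z H'/H` is the holomorphic extension of
`z G'/G` across `0`, with `p 0 = 1` and `Re p > 0`, and oddness of `G` makes `p` even. The Cayley
transform `(p - 1)/(p + 1)` is therefore an even self-map of the disk fixing `0`, so Schwarz's lemma
applied twice bounds it by `|z|²`; this gives `(1 - r²)/(1 + r²) ≤ Re p ≤ (1 + r²)/(1 - r²)`.
As `d/dt log |H (t z)| = (Re p (t z) - 1)/t`, integrating along the radius yields
`1/(1 + r²) ≤ |H z| ≤ 1/(1 - r²)`.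
-/

theorem sub_le_sub_of_hasDerivAt_le {f g f' g' : ℝ → ℝ} {a b : ℝ} (hab : a ≤ b)
    (hf : ∀ x ∈ Icc a b, HasDerivAt f (f' x) x) (hg : ∀ x ∈ Icc a b, HasDerivAt g (g' x) x)
    (hle : ∀ x ∈ Ioo a b, f' x ≤ g' x) : f b - f a ≤ g b - g a := by
  have hmono : MonotoneOn (fun x => g x - f x) (Icc a b) :=
    monotoneOn_of_hasDerivWithinAt_nonneg (convex_Icc a b)
      (fun x hx => ((hg x hx).sub (hf x hx)).continuousAt.continuousWithinAt)
      (fun x hx => ((hg x (interior_subset hx)).sub (hf x (interior_subset hx))).hasDerivWithinAt)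
      (fun x hx => sub_nonneg.2 (hle x (by simpa using hx)))
  have := hmono (left_mem_Icc.2 hab) (right_mem_Icc.2 hab) hab
  linarith

theorem HasDerivAt.log_norm {g : ℝ → ℂ} {g' : ℂ} {t : ℝ} (hg : HasDerivAt g g' t)
    (hne : g t ≠ 0) : HasDerivAt (fun s => Real.log ‖g s‖) (g' / g t).re t := by
  have hsq : ‖g t‖ ^ 2 ≠ 0 := by positivity
  have hlog : (fun s => Real.log ‖g s‖) = fun s => Real.log (‖g s‖ ^ 2) / 2 := by
    funext s
    rw [Real.log_pow]
    push_cast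
    ring
  have hre : (g' / g t).re = 2 * Inner.inner ℝ (g t) g' / ‖g t‖ ^ 2 / 2 := by
    rw [Complex.inner, Complex.div_re, Complex.sq_norm]
    simp only [mul_re, conj_re, conj_im]
    field_simp
    ring
  rw [hlog, hre]
  exact (hg.norm_sq.log hsq).div_const 2

section EvenOdd

variable {𝕜 F : Type*} [NontriviallyNormedField 𝕜] [NormedAddCommGroup F] [NormedSpace 𝕜 F]

theorem deriv_eq_zero_of_even [IsAddTorsionFree F] {f : 𝕜 → F}
    (h : (fun z => f (-z)) =ᶠ[𝓝 0] f) : deriv f 0 = 0 := by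
  have := h.deriv_eq
  rw [deriv_comp_neg, neg_zero] at this
  exact self_eq_neg.mp this.symm

theorem deriv_neg_eq_of_odd {f : 𝕜 → F} {z : 𝕜} (h : (fun w => f (-w)) =ᶠ[𝓝 z] fun w => -f w) :
    deriv f (-z) = deriv f z := by
  have := h.deriv_eq
  rw [deriv_comp_neg, deriv.fun_neg] at this
  exact neg_inj.mp this

theorem neg_mul_deriv_div_of_odd {f : 𝕜 → 𝕜} {z : 𝕜}
    (h : (fun w => f (-w)) =ᶠ[𝓝 z] fun w => -f w) :
    -z * deriv f (-z) / f (-z) = z * deriv f z / f z := by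
  have hz : f (-z) = -f z := h.self_of_nhds
  rw [deriv_neg_eq_of_odd h, hz, neg_mul, neg_div_neg_eq]

end EvenOdd

theorem norm_le_norm_sq_of_mapsTo_ball {f : ℂ → ℂ} (hd : DifferentiableOn ℂ f (ball 0 1))
    (h_maps : MapsTo f (ball 0 1) (closedBall 0 1)) (h₀ : f 0 = 0) (h₁ : deriv f 0 = 0)
    {z : ℂ} (hz : z ∈ ball 0 1) : ‖f z‖ ≤ ‖z‖ ^ 2 := by
  set g := dslope f 0 with hg
  have hgd : DifferentiableOn ℂ g (ball 0 1) :=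
    (differentiableOn_dslope (ball_mem_nhds _ one_pos)).2 hd
  have hg₀ : g 0 = 0 := by rw [hg, dslope_same, h₁]
  have hg_maps : MapsTo g (ball 0 1) (closedBall 0 1) := fun w hw => by
    simpa using norm_dslope_le_div_of_mapsTo_ball hd (by rwa [h₀]) hw
  have hbound : ‖dslope g 0 z‖ ≤ 1 := by
    simpa using norm_dslope_le_div_of_mapsTo_ball hgd (by rwa [hg₀]) hz
  have hfz : f z = z * (z * dslope g 0 z) := by
    have h1 := sub_smul_dslope f 0 z
    have h2 := sub_smul_dslope g 0 z
    simp only [sub_zero, smul_eq_mul, h₀, hg₀] at h1 h2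
    rw [h2]
    exact h1.symm
  calc ‖f z‖ = ‖z‖ ^ 2 * ‖dslope g 0 z‖ := by rw [hfz, norm_mul, norm_mul]; ring
    _ ≤ ‖z‖ ^ 2 := mul_le_of_le_one_right (by positivity) hbound

theorem norm_sub_one_lt_norm_add_one {p : ℂ} (hp : 0 < p.re) : ‖p - 1‖ < ‖p + 1‖ := by
  rw [← sq_lt_sq₀ (norm_nonneg _) (norm_nonneg _), Complex.sq_norm, Complex.sq_norm,
    normSq_apply, normSq_apply]
  simp only [sub_re, add_re, sub_im, add_im, one_re, one_im]
  nlinarith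

theorem re_one_add_div_one_sub {w : ℂ} :
    ((1 + w) / (1 - w)).re = (1 - ‖w‖ ^ 2) / ‖1 - w‖ ^ 2 := by
  rw [div_re, ← add_div]
  simp only [Complex.sq_norm, normSq_apply, add_re, sub_re, add_im, sub_im, one_re, one_im]
  ring

theorem re_one_add_div_one_sub_mem_Icc {w : ℂ} {s : ℝ} (hw : ‖w‖ ≤ s) (hs : s < 1) :
    (1 - s) / (1 + s) ≤ ((1 + w) / (1 - w)).re ∧ ((1 + w) / (1 - w)).re ≤ (1 + s) / (1 - s) := by
  have hd₁ : 1 - ‖w‖ ≤ ‖1 - w‖ := by simpa using norm_sub_norm_le (1 : ℂ) w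
  have hd₂ : ‖1 - w‖ ≤ 1 + ‖w‖ := by simpa using norm_sub_le (1 : ℂ) w
  have hn := norm_nonneg w
  have hd : 0 < ‖1 - w‖ := by linarith
  rw [re_one_add_div_one_sub, div_le_div_iff₀ (by linarith) (by positivity),
    div_le_div_iff₀ (by positivity) (by linarith)]
  constructor <;> nlinarith [mul_le_mul hd₁ hd₁ (by linarith) hd.le,
    mul_le_mul hd₂ hd₂ hd.le (by linarith), mul_nonneg (sub_nonneg.2 hw) (sub_nonneg.2 hd₁)]

theorem re_mem_Icc_of_even_of_re_pos {p : ℂ → ℂ} (hd : DifferentiableOn ℂ p (ball 0 1))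
    (hre : ∀ z ∈ ball (0 : ℂ) 1, 0 < (p z).re) (h₀ : p 0 = 1)
    (heven : ∀ z ∈ ball (0 : ℂ) 1, p (-z) = p z) {z : ℂ} (hz : z ∈ ball (0 : ℂ) 1) :
    (1 - ‖z‖ ^ 2) / (1 + ‖z‖ ^ 2) ≤ (p z).re ∧ (p z).re ≤ (1 + ‖z‖ ^ 2) / (1 - ‖z‖ ^ 2) := by
  have hadd : ∀ w ∈ ball (0 : ℂ) 1, p w + 1 ≠ 0 := fun w hw h => by
    have := norm_sub_one_lt_norm_add_one (hre w hw)
    rw [h, norm_zero] at this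
    exact (norm_nonneg _).not_gt this
  set q := fun w => (p w - 1) / (p w + 1) with hq
  have hqd : DifferentiableOn ℂ q (ball 0 1) := (hd.sub_const 1).div (hd.add_const 1) hadd
  have hq_maps : MapsTo q (ball 0 1) (closedBall 0 1) := fun w hw => by
    rw [mem_closedBall_zero_iff, hq, norm_div, div_le_one (norm_pos_iff.2 (hadd w hw))]
    exact (norm_sub_one_lt_norm_add_one (hre w hw)).le
  have hq₀ : q 0 = 0 := by simp [hq, h₀]
  have hq₁ : deriv q 0 = 0 := deriv_eq_zero_of_even <|
    eventually_of_mem (ball_mem_nhds 0 one_pos) fun w hw => by simp only [hq, heven w hw]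
  have hpq : p z = (1 + q z) / (1 - q z) := by
    have := hadd z hz
    rw [hq]
    field_simp
    ring
  rw [hpq]
  exact re_one_add_div_one_sub_mem_Icc (norm_le_norm_sq_of_mapsTo_ball hqd hq_maps hq₀ hq₁ hz)
    (pow_lt_one₀ (norm_nonneg z) (mem_ball_zero_iff.1 hz) two_ne_zero)

theorem ofReal_mul_mem_ball {t : ℝ} {z : ℂ} (ht : t ∈ Icc (0 : ℝ) 1) (hz : z ∈ ball (0 : ℂ) 1) :
    (t : ℂ) * z ∈ ball (0 : ℂ) 1 := by
  rw [mem_ball_zero_iff, norm_mul, norm_real, Real.norm_of_nonneg ht.1]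
  exact lt_of_le_of_lt (mul_le_of_le_one_left (norm_nonneg z) ht.2) (mem_ball_zero_iff.1 hz)

theorem hasDerivAt_log_norm_comp_ofReal_mul {h : ℂ → ℂ} (hd : DifferentiableOn ℂ h (ball 0 1))
    (hne : ∀ w ∈ ball (0 : ℂ) 1, h w ≠ 0) {z : ℂ} (hz : z ∈ ball (0 : ℂ) 1) :
    ∀ t ∈ Icc (0 : ℝ) 1, HasDerivAt (fun s : ℝ => Real.log ‖h (s * z)‖)
      (z * deriv h (t * z) / h (t * z)).re t := by
  intro t ht
  have hmem := ofReal_mul_mem_ball ht hz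
  have hlin : HasDerivAt (fun s : ℂ => s * z) z t := by
    simpa using (hasDerivAt_id (t : ℂ)).mul_const z
  have hray : HasDerivAt (fun s : ℝ => h (s * z)) (deriv h (t * z) * z) t :=
    ((hd.differentiableAt (isOpen_ball.mem_nhds hmem)).hasDerivAt.comp (t : ℂ) hlin).comp_ofReal
  rw [mul_comm z]
  exact hray.log_norm (hne _ hmem)

theorem re_one_add_ofReal_mul_mul_div (t : ℝ) (z a b : ℂ) :
    (1 + (t : ℂ) * z * a / b).re = 1 + t * (z * a / b).re := by
  rw [mul_assoc, mul_div_assoc, add_re, one_re, re_ofReal_mul]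

theorem norm_le_one_div_one_sub_sq {h : ℂ → ℂ} (hd : DifferentiableOn ℂ h (ball 0 1))
    (hne : ∀ w ∈ ball (0 : ℂ) 1, h w ≠ 0) (h₀ : h 0 = 1)
    (hre : ∀ w ∈ ball (0 : ℂ) 1, (1 + w * deriv h w / h w).re ≤ (1 + ‖w‖ ^ 2) / (1 - ‖w‖ ^ 2))
    {z : ℂ} (hz : z ∈ ball (0 : ℂ) 1) : ‖h z‖ ≤ 1 / (1 - ‖z‖ ^ 2) := by
  have hr : ‖z‖ ^ 2 < 1 := pow_lt_one₀ (norm_nonneg z) (mem_ball_zero_iff.1 hz) two_ne_zero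
  have hpos : ∀ t ∈ Icc (0 : ℝ) 1, 0 < 1 - ‖z‖ ^ 2 * t ^ 2 := fun t ht => by
    have := mul_le_of_le_one_right (sq_nonneg ‖z‖) (pow_le_one₀ ht.1 ht.2 : t ^ 2 ≤ 1)
    linarith
  have hg : ∀ t ∈ Icc (0 : ℝ) 1, HasDerivAt (fun s => -Real.log (1 - ‖z‖ ^ 2 * s ^ 2))
      (2 * ‖z‖ ^ 2 * t / (1 - ‖z‖ ^ 2 * t ^ 2)) t := fun t ht => by
    refine ((((hasDerivAt_pow 2 t).const_mul (‖z‖ ^ 2)).const_sub 1).log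
      (hpos t ht).ne').fun_neg.congr_deriv ?_
    push_cast
    ring
  have hle : ∀ t ∈ Ioo (0 : ℝ) 1,
      (z * deriv h (t * z) / h (t * z)).re ≤ 2 * ‖z‖ ^ 2 * t / (1 - ‖z‖ ^ 2 * t ^ 2) := by
    intro t ht
    have hden := hpos t (Ioo_subset_Icc_self ht)
    have := hre _ (ofReal_mul_mem_ball (Ioo_subset_Icc_self ht) hz)
    rw [norm_mul, norm_real, Real.norm_of_nonneg ht.1.le, mul_pow,
      re_one_add_ofReal_mul_mul_div,
      le_div_iff₀ (by linarith)] at this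
    rw [le_div_iff₀ hden]
    nlinarith [ht.1]
  have key := sub_le_sub_of_hasDerivAt_le zero_le_one
    (hasDerivAt_log_norm_comp_ofReal_mul hd hne hz) hg hle
  simp only [ofReal_one, one_mul, ofReal_zero, zero_mul, h₀, norm_one, Real.log_one,
    one_pow, mul_one, zero_pow two_ne_zero, mul_zero, sub_zero, neg_zero] at key
  rwa [← Real.log_le_log_iff (norm_pos_iff.2 (hne z hz)) (by positivity), one_div, Real.log_inv]

theorem one_div_one_add_sq_le_norm {h : ℂ → ℂ} (hd : DifferentiableOn ℂ h (ball 0 1))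
    (hne : ∀ w ∈ ball (0 : ℂ) 1, h w ≠ 0) (h₀ : h 0 = 1)
    (hre : ∀ w ∈ ball (0 : ℂ) 1, (1 - ‖w‖ ^ 2) / (1 + ‖w‖ ^ 2) ≤ (1 + w * deriv h w / h w).re)
    {z : ℂ} (hz : z ∈ ball (0 : ℂ) 1) : 1 / (1 + ‖z‖ ^ 2) ≤ ‖h z‖ := by
  have hf : ∀ t ∈ Icc (0 : ℝ) 1, HasDerivAt (fun s => -Real.log (1 + ‖z‖ ^ 2 * s ^ 2))
      (-2 * ‖z‖ ^ 2 * t / (1 + ‖z‖ ^ 2 * t ^ 2)) t := fun t _ => by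
    refine ((((hasDerivAt_pow 2 t).const_mul (‖z‖ ^ 2)).const_add 1).log
      (by positivity)).fun_neg.congr_deriv ?_
    push_cast
    ring
  have hle : ∀ t ∈ Ioo (0 : ℝ) 1,
      -2 * ‖z‖ ^ 2 * t / (1 + ‖z‖ ^ 2 * t ^ 2) ≤ (z * deriv h (t * z) / h (t * z)).re := by
    intro t ht
    have := hre _ (ofReal_mul_mem_ball (Ioo_subset_Icc_self ht) hz)
    rw [norm_mul, norm_real, Real.norm_of_nonneg ht.1.le, mul_pow,
      re_one_add_ofReal_mul_mul_div,
      div_le_iff₀ (by positivity)] at this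
    rw [div_le_iff₀ (by positivity)]
    nlinarith [ht.1]
  have key := sub_le_sub_of_hasDerivAt_le zero_le_one hf
    (hasDerivAt_log_norm_comp_ofReal_mul hd hne hz) hle
  simp only [ofReal_one, one_mul, ofReal_zero, zero_mul, h₀, norm_one, Real.log_one,
    one_pow, mul_one, zero_pow two_ne_zero, mul_zero, add_zero, sub_zero, neg_zero] at key
  rwa [← Real.log_le_log_iff (by positivity) (norm_pos_iff.2 (hne z hz)), one_div, Real.log_inv]

section DSlope

variable {𝕜 : Type*} [NontriviallyNormedField 𝕜]

theorem eq_mul_dslope_of_map_zero {f : 𝕜 → 𝕜} (h₀ : f 0 = 0) (z : 𝕜) :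
    f z = z * dslope f 0 z := by
  simpa [h₀] using (sub_smul_dslope f 0 z).symm

theorem mul_deriv_mul_self_div {h : 𝕜 → 𝕜} {z : 𝕜} (hz : z ≠ 0) (hd : DifferentiableAt 𝕜 h z)
    (hne : h z ≠ 0) : z * deriv (fun w => w * h w) z / (z * h z) = 1 + z * deriv h z / h z := by
  rw [((hasDerivAt_id' z).fun_mul hd.hasDerivAt).deriv]
  field_simp

end DSlope

section OddStarlike

variable {G : ℂ → ℂ}

theorem dslope_ne_zero_of_starlike (hG0 : G 0 = 0) (hG1 : deriv G 0 = 1)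
    (hstar : ∀ z ∈ ball (0 : ℂ) 1, z ≠ 0 → 0 < (z * deriv G z / G z).re)
    {z : ℂ} (hz : z ∈ ball (0 : ℂ) 1) : dslope G 0 z ≠ 0 := by
  rcases eq_or_ne z 0 with rfl | hz0
  · rw [dslope_same, hG1]
    exact one_ne_zero
  · intro h
    have := hstar z hz hz0
    rw [eq_mul_dslope_of_map_zero hG0 z, h, mul_zero, div_zero, zero_re] at this
    exact lt_irrefl 0 this

theorem re_bounds_of_odd_starlike (hG : DifferentiableOn ℂ G (ball 0 1)) (hG0 : G 0 = 0)
    (hG1 : deriv G 0 = 1) (hodd : ∀ z ∈ ball (0 : ℂ) 1, G (-z) = -G z)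
    (hstar : ∀ z ∈ ball (0 : ℂ) 1, z ≠ 0 → 0 < (z * deriv G z / G z).re)
    {z : ℂ} (hz : z ∈ ball (0 : ℂ) 1) :
    (1 - ‖z‖ ^ 2) / (1 + ‖z‖ ^ 2) ≤ (1 + z * deriv (dslope G 0) z / dslope G 0 z).re ∧
      (1 + z * deriv (dslope G 0) z / dslope G 0 z).re ≤ (1 + ‖z‖ ^ 2) / (1 - ‖z‖ ^ 2) := by
  set H := dslope G 0
  have hHd : DifferentiableOn ℂ H (ball 0 1) :=
    (differentiableOn_dslope (ball_mem_nhds _ one_pos)).2 hG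
  have hHne : ∀ w ∈ ball (0 : ℂ) 1, H w ≠ 0 :=
    fun w hw => dslope_ne_zero_of_starlike hG0 hG1 hstar hw
  have hGH : G = fun w => w * H w := funext (eq_mul_dslope_of_map_zero hG0)
  have hp : ∀ w ∈ ball (0 : ℂ) 1, w ≠ 0 → 1 + w * deriv H w / H w = w * deriv G w / G w :=
    fun w hw hw0 => by
      rw [hGH, mul_deriv_mul_self_div hw0 (hHd.differentiableAt (isOpen_ball.mem_nhds hw))
        (hHne w hw)]
  refine re_mem_Icc_of_even_of_re_pos (p := fun w => 1 + w * deriv H w / H w)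
    ?_ ?_ (by simp) ?_ hz
  · exact (differentiableOn_const 1).add
      ((differentiableOn_id.mul (hHd.deriv isOpen_ball)).div hHd hHne)
  · intro w hw
    rcases eq_or_ne w 0 with rfl | hw0
    · simp
    · rw [hp w hw hw0]
      exact hstar w hw hw0
  · intro w hw
    rcases eq_or_ne w 0 with rfl | hw0
    · rw [neg_zero]
    have hnw : -w ∈ ball (0 : ℂ) 1 := by simpa using hw
    rw [hp w hw hw0, hp (-w) hnw (neg_ne_zero.2 hw0)]
    exact neg_mul_deriv_div_of_odd <| eventually_of_mem (isOpen_ball.mem_nhds hw) hodd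

end OddStarlike

theorem odd_starlike_growth (G : ℂ → ℂ)
    (hG : AnalyticOnNhd ℂ G (ball (0:ℂ) 1))
    (hG0 : G 0 = 0) (hG1 : deriv G 0 = 1)
    (hodd : ∀ z ∈ ball (0:ℂ) 1, G (-z) = -G z)
    (hstar : ∀ z ∈ ball (0:ℂ) 1, z ≠ 0 → 0 < (z * deriv G z / G z).re) :
    ∀ z ∈ ball (0:ℂ) 1,
      ‖z‖ / (1 + ‖z‖ ^ 2) ≤ ‖G z‖ ∧
      ‖G z‖ ≤ ‖z‖ / (1 - ‖z‖ ^ 2) := by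
  intro z hz
  have hHd : DifferentiableOn ℂ (dslope G 0) (ball 0 1) :=
    (differentiableOn_dslope (ball_mem_nhds _ one_pos)).2 hG.differentiableOn
  have hHne : ∀ w ∈ ball (0 : ℂ) 1, dslope G 0 w ≠ 0 :=
    fun w hw => dslope_ne_zero_of_starlike hG0 hG1 hstar hw
  have hH0 : dslope G 0 0 = 1 := by rw [dslope_same, hG1]
  have hre := fun w (hw : w ∈ ball (0 : ℂ) 1) =>
    re_bounds_of_odd_starlike hG.differentiableOn hG0 hG1 hodd hstar hw
  have hlower := one_div_one_add_sq_le_norm hHd hHne hH0 (fun w hw => (hre w hw).1) hz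
  have hupper := norm_le_one_div_one_sub_sq hHd hHne hH0 (fun w hw => (hre w hw).2) hz
  rw [eq_mul_dslope_of_map_zero hG0 z, norm_mul, div_eq_mul_one_div ‖z‖,
    div_eq_mul_one_div ‖z‖]
  exact ⟨by gcongr, by gcongr⟩
end

section
/- Let φ(z) = 1 + B₁z + B₂z² + ⋯ with B₁ > 0 be analytic on the unit disk, and let f(z) = z + a₂z² + a₃z³ + ⋯ be analytic on 𝔻. Suppose there exists g starlike of order 1/2 such that -z²f'(z)/(g(z)g(-z)) = φ(w(z)) for some analytic w with w(0)=0, |w(z)|<1. Then for every μ ∈ ℂ, |a₃ - μa₂²| ≤ 1/3 + max(B₁/3, |B₂/3 - μB₁²/4|). -/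
/-!
Write `g z = z * G z` with `G = dslope g 0`. The hypothesis becomes `f' = φ ∘ w * Q` with
`Q z = G z * G (-z)`, and comparing Taylor coefficients gives `2 a₂ = B₁ c₁` and
`3 a₃ = B₂ c₁² + B₁ c₂ + (2 b₃ - b₂²)`, where `cₖ`, `bₖ` are the coefficients of `w` and `g`.
Starlikeness of order `1/2` says that `v = G / g'` maps the disk into the disk of radius `1`
about `1`; then `G = g' * v` gives `2 b₃ - b₂² = v₁² - v₂`. For a holomorphic map `v` of the disk
into a unit disk centred at `v 0`, the Schwarz lemma puts `dslope v 0` in the closed unit disk and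
Schwarz–Pick at the origin gives `|v₂| ≤ 1 - |v₁|²`. Applied to `w` and to `v`, this bounds
`|a₃ - μ a₂²|` by `1/3 + B₁ (1 - |c₁|²) / 3 + |B₂/3 - μ B₁²/4| |c₁|²`, and the last two terms
form a convex combination of `B₁/3` and `|B₂/3 - μ B₁²/4|`.
-/

open Complex Metric

open Filter Set Topology Function

section TaylorCoeff

variable {𝕜 : Type*} [NontriviallyNormedField 𝕜] {F G Φ V : 𝕜 → 𝕜} {a : 𝕜}

/-- Defined through `dslope` rather than `iteratedDeriv` (see `AnalyticAt.taylorCoeff_eq`) so that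
the product and chain rules below are pointwise identities. -/
noncomputable def taylorCoeff (n : ℕ) (F : 𝕜 → 𝕜) : 𝕜 := ((swap dslope 0)^[n] F) 0

theorem taylorCoeff_succ (n : ℕ) (F : 𝕜 → 𝕜) :
    taylorCoeff (n + 1) F = taylorCoeff n (dslope F 0) := rfl

theorem taylorCoeff_one (F : 𝕜 → 𝕜) : taylorCoeff 1 F = deriv F 0 := dslope_same F 0

theorem taylorCoeff_two (F : 𝕜 → 𝕜) : taylorCoeff 2 F = deriv (dslope F 0) 0 :=
  dslope_same _ 0

theorem HasFPowerSeriesAt.taylorCoeff_eq {p : FormalMultilinearSeries 𝕜 𝕜 𝕜}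
    (hp : HasFPowerSeriesAt F p 0) (n : ℕ) : taylorCoeff n F = p.coeff n := by
  rw [taylorCoeff, ← (hp.has_fpower_series_iterate_dslope_fslope n).coeff_zero (fun _ => 1)]
  exact (FormalMultilinearSeries.coeff_iterate_fslope n 0).trans (by rw [zero_add])

theorem AnalyticAt.taylorCoeff_eq [CompleteSpace 𝕜] [CharZero 𝕜] (hF : AnalyticAt 𝕜 F 0)
    (n : ℕ) : taylorCoeff n F = iteratedDeriv n F 0 / n.factorial := by
  rw [hF.hasFPowerSeriesAt.taylorCoeff_eq, FormalMultilinearSeries.coeff_ofScalars]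

theorem AnalyticAt.dslope (hF : AnalyticAt 𝕜 F a) : AnalyticAt 𝕜 (dslope F a) a :=
  let ⟨_, hp⟩ := hF
  ⟨_, hp.has_fpower_series_dslope_fslope⟩

theorem Filter.EventuallyEq.dslope (h : F =ᶠ[𝓝 a] G) : dslope F a =ᶠ[𝓝 a] dslope G a := by
  filter_upwards [h] with z hz
  rcases eq_or_ne z a with rfl | hne
  · simpa only [dslope_same] using h.deriv_eq
  · simp only [dslope_of_ne _ hne, slope, hz, h.self_of_nhds]

theorem Filter.EventuallyEq.taylorCoeff_eq (h : F =ᶠ[𝓝 0] G) (n : ℕ) :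
    taylorCoeff n F = taylorCoeff n G := by
  induction n generalizing F G with
  | zero => exact h.self_of_nhds
  | succ n ih => exact ih h.dslope

theorem dslope_fun_mul (hF : DifferentiableAt 𝕜 F a) (hG : DifferentiableAt 𝕜 G a) :
    dslope (fun z => F z * G z) a = fun z => F z * dslope G a z + G a * dslope F a z := by
  funext z
  rcases eq_or_ne z a with rfl | hne
  · simp only [dslope_same, deriv_fun_mul hF hG]
    ring
  · simp only [dslope_of_ne _ hne, slope, vsub_eq_sub, smul_eq_mul]
    ring

theorem dslope_fun_comp (hΦ : DifferentiableAt 𝕜 Φ (V a)) (hV : DifferentiableAt 𝕜 V a) :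
    dslope (fun z => Φ (V z)) a = fun z => dslope Φ (V a) (V z) * dslope V a z := by
  funext z
  rcases eq_or_ne z a with rfl | hne
  · simp only [dslope_same]
    exact deriv_comp _ hΦ hV
  · rcases eq_or_ne (V z) (V a) with hVz | hVz
    · simp [dslope_of_ne _ hne, slope, hVz]
    · simp only [dslope_of_ne _ hne, dslope_of_ne _ hVz, slope, vsub_eq_sub, smul_eq_mul]
      field_simp [sub_ne_zero.2 hVz]

theorem taylorCoeff_one_mul (hF : DifferentiableAt 𝕜 F 0) (hG : DifferentiableAt 𝕜 G 0) :
    taylorCoeff 1 (fun z => F z * G z) = F 0 * taylorCoeff 1 G + taylorCoeff 1 F * G 0 := by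
  simp only [taylorCoeff_one, deriv_fun_mul hF hG]
  ring

theorem taylorCoeff_two_mul (hF : AnalyticAt 𝕜 F 0) (hG : AnalyticAt 𝕜 G 0) :
    taylorCoeff 2 (fun z => F z * G z) =
      F 0 * taylorCoeff 2 G + taylorCoeff 1 F * taylorCoeff 1 G + taylorCoeff 2 F * G 0 := by
  have hFG : DifferentiableAt 𝕜 (fun z => F z * dslope G 0 z) 0 :=
    hF.differentiableAt.mul hG.dslope.differentiableAt
  have hGF : DifferentiableAt 𝕜 (fun z => G 0 * dslope F 0 z) 0 :=
    hF.dslope.differentiableAt.const_mul _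
  rw [taylorCoeff_two, dslope_fun_mul hF.differentiableAt hG.differentiableAt,
    deriv_fun_add hFG hGF, deriv_fun_mul hF.differentiableAt hG.dslope.differentiableAt,
    deriv_const_mul_field, ← taylorCoeff_two, ← taylorCoeff_two, dslope_same, ← taylorCoeff_one,
    ← taylorCoeff_one]
  ring

theorem taylorCoeff_one_comp (hΦ : DifferentiableAt 𝕜 Φ 0) (hV : DifferentiableAt 𝕜 V 0)
    (hV0 : V 0 = 0) : taylorCoeff 1 (fun z => Φ (V z)) = taylorCoeff 1 Φ * taylorCoeff 1 V := by
  rw [← hV0] at hΦ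
  have h := deriv_comp 0 hΦ hV
  rw [hV0] at h
  rw [taylorCoeff_one, taylorCoeff_one, taylorCoeff_one]
  exact h

theorem taylorCoeff_two_comp (hΦ : AnalyticAt 𝕜 Φ 0) (hV : AnalyticAt 𝕜 V 0) (hV0 : V 0 = 0) :
    taylorCoeff 2 (fun z => Φ (V z)) =
      taylorCoeff 2 Φ * taylorCoeff 1 V ^ 2 + taylorCoeff 1 Φ * taylorCoeff 2 V := by
  have hcomp := dslope_fun_comp (by rwa [hV0] : AnalyticAt 𝕜 Φ (V 0)).differentiableAt
    hV.differentiableAt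
  rw [hV0] at hcomp
  have hΦ' : DifferentiableAt 𝕜 (dslope Φ 0) (V 0) := by rw [hV0]; exact hΦ.dslope.differentiableAt
  have hΦV : DifferentiableAt 𝕜 (fun z => dslope Φ 0 (V z)) 0 := hΦ'.comp 0 hV.differentiableAt
  rw [taylorCoeff_two, hcomp, deriv_fun_mul hΦV hV.dslope.differentiableAt,
    show deriv (fun z => dslope Φ 0 (V z)) 0 = deriv (dslope Φ 0) (V 0) * deriv V 0 from
      deriv_comp 0 hΦ' hV.differentiableAt, hV0, ← taylorCoeff_two, ← taylorCoeff_two]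
  simp only [dslope_same, ← taylorCoeff_one]
  ring

section CharZero

variable [CompleteSpace 𝕜] [CharZero 𝕜]

theorem taylorCoeff_deriv (hF : AnalyticAt 𝕜 F 0) (n : ℕ) :
    taylorCoeff n (deriv F) = (n + 1) * taylorCoeff (n + 1) F := by
  rw [hF.deriv.taylorCoeff_eq, hF.taylorCoeff_eq, iteratedDeriv_succ', Nat.factorial_succ]
  push_cast
  field_simp

theorem taylorCoeff_comp_neg (hF : AnalyticAt 𝕜 F 0) (n : ℕ) :
    taylorCoeff n (fun z => F (-z)) = (-1) ^ n * taylorCoeff n F := by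
  have hF' : AnalyticAt 𝕜 (fun z => F (-z)) 0 := hF.comp_of_eq analyticAt_id.neg neg_zero
  rw [hF'.taylorCoeff_eq, hF.taylorCoeff_eq, iteratedDeriv_comp_neg, neg_zero, smul_eq_mul,
    mul_div_assoc]

theorem taylorCoeff_one_mul_comp_neg (hF : AnalyticAt 𝕜 F 0) :
    taylorCoeff 1 (fun z => F z * F (-z)) = 0 := by
  have hF' : AnalyticAt 𝕜 (fun z => F (-z)) 0 := hF.comp_of_eq analyticAt_id.neg neg_zero
  rw [taylorCoeff_one_mul hF.differentiableAt hF'.differentiableAt, taylorCoeff_comp_neg hF,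
    neg_zero]
  ring

theorem taylorCoeff_two_mul_comp_neg (hF : AnalyticAt 𝕜 F 0) :
    taylorCoeff 2 (fun z => F z * F (-z)) = 2 * F 0 * taylorCoeff 2 F - taylorCoeff 1 F ^ 2 := by
  have hF' : AnalyticAt 𝕜 (fun z => F (-z)) 0 := hF.comp_of_eq analyticAt_id.neg neg_zero
  rw [taylorCoeff_two_mul hF hF', taylorCoeff_comp_neg hF, taylorCoeff_comp_neg hF, neg_zero]
  ring

theorem taylorCoeff_two_dslope_mul_dslope_neg (hF : AnalyticAt 𝕜 F 0) (hF1 : deriv F 0 = 1) :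
    taylorCoeff 2 (fun z => dslope F 0 z * dslope F 0 (-z)) =
      2 * taylorCoeff 3 F - taylorCoeff 2 F ^ 2 := by
  rw [taylorCoeff_two_mul_comp_neg hF.dslope, dslope_same, hF1, mul_one]
  rfl

theorem taylorCoeff_of_deriv_eventuallyEq_comp_mul {f φ w Q : 𝕜 → 𝕜} (hf : AnalyticAt 𝕜 f 0)
    (hφ : AnalyticAt 𝕜 φ 0) (hw : AnalyticAt 𝕜 w 0) (hQ : AnalyticAt 𝕜 Q 0) (hφ0 : φ 0 = 1)
    (hw0 : w 0 = 0) (hQ0 : Q 0 = 1) (hQ1 : taylorCoeff 1 Q = 0)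
    (h : deriv f =ᶠ[𝓝 0] fun z => φ (w z) * Q z) :
    2 * taylorCoeff 2 f = taylorCoeff 1 φ * taylorCoeff 1 w ∧
      3 * taylorCoeff 3 f = taylorCoeff 2 φ * taylorCoeff 1 w ^ 2 +
        taylorCoeff 1 φ * taylorCoeff 2 w + taylorCoeff 2 Q := by
  have hφw : AnalyticAt 𝕜 (fun z => φ (w z)) 0 := hφ.comp_of_eq hw hw0
  have h1 := taylorCoeff_deriv hf 1
  have h2 := taylorCoeff_deriv hf 2
  rw [h.taylorCoeff_eq, taylorCoeff_one_mul hφw.differentiableAt hQ.differentiableAt,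
    taylorCoeff_one_comp hφ.differentiableAt hw.differentiableAt hw0, hw0, hφ0, hQ0, hQ1] at h1
  rw [h.taylorCoeff_eq, taylorCoeff_two_mul hφw hQ, taylorCoeff_two_comp hφ hw hw0,
    taylorCoeff_one_comp hφ.differentiableAt hw.differentiableAt hw0, hw0, hφ0, hQ0, hQ1] at h2
  constructor
  · linear_combination -h1
  · linear_combination -h2

theorem two_mul_taylorCoeff_three_sub_sq_eq {g v : 𝕜 → 𝕜} (hg : AnalyticAt 𝕜 g 0)
    (hv : AnalyticAt 𝕜 v 0) (hg1 : deriv g 0 = 1) (hv0 : v 0 = 1)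
    (h : dslope g 0 =ᶠ[𝓝 0] fun z => deriv g z * v z) :
    2 * taylorCoeff 3 g - taylorCoeff 2 g ^ 2 = taylorCoeff 1 v ^ 2 - taylorCoeff 2 v := by
  have h1 := h.taylorCoeff_eq 1
  have h2 := h.taylorCoeff_eq 2
  rw [← taylorCoeff_succ, taylorCoeff_one_mul hg.deriv.differentiableAt hv.differentiableAt,
    taylorCoeff_deriv hg 1, hg1, hv0] at h1
  rw [← taylorCoeff_succ, taylorCoeff_two_mul hg.deriv hv, taylorCoeff_deriv hg 1,
    taylorCoeff_deriv hg 2, hg1, hv0] at h2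
  linear_combination -h2 + (taylorCoeff 2 g + taylorCoeff 1 v) * h1

end CharZero

end TaylorCoeff

section Schwarz

open scoped ComplexConjugate

theorem one_sub_conj_mul_ne_zero {a ζ : ℂ} (ha : ‖a‖ < 1) (hζ : ‖ζ‖ ≤ 1) :
    1 - conj a * ζ ≠ 0 := by
  intro h
  have h1 := congrArg norm (sub_eq_zero.1 h)
  rw [norm_mul, Complex.norm_conj, norm_one] at h1
  nlinarith [norm_nonneg a, norm_nonneg ζ]

theorem norm_sub_div_one_sub_conj_mul_lt_one {a ζ : ℂ} (ha : ‖a‖ < 1) (hζ : ‖ζ‖ < 1) :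
    ‖(ζ - a) / (1 - conj a * ζ)‖ < 1 := by
  rw [norm_div, div_lt_one (norm_pos_iff.2 (one_sub_conj_mul_ne_zero ha hζ.le))]
  have key : ‖1 - conj a * ζ‖ ^ 2 - ‖ζ - a‖ ^ 2 = (1 - ‖a‖ ^ 2) * (1 - ‖ζ‖ ^ 2) := by
    simp only [← Complex.normSq_eq_norm_sq, normSq_apply, sub_re, sub_im, one_re, one_im, mul_re,
      mul_im, conj_re, conj_im]
    ring
  refine lt_of_pow_lt_pow_left₀ 2 (norm_nonneg _) ?_
  nlinarith [mul_pos (by nlinarith [norm_nonneg a] : 0 < 1 - ‖a‖ ^ 2)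
    (by nlinarith [norm_nonneg ζ] : 0 < 1 - ‖ζ‖ ^ 2)]

theorem norm_deriv_zero_le_of_mapsTo_ball {u : ℂ → ℂ} (hu : DifferentiableOn ℂ u (ball 0 1))
    (hmaps : MapsTo u (ball 0 1) (ball 0 1)) : ‖deriv u 0‖ ≤ 1 - ‖u 0‖ ^ 2 := by
  have h0 : (0 : ℂ) ∈ ball (0 : ℂ) 1 := mem_ball_self one_pos
  set a := u 0
  have ha : ‖a‖ < 1 := mem_ball_zero_iff.1 (hmaps h0)
  have ha' : 0 < 1 - ‖a‖ ^ 2 := by nlinarith [norm_nonneg a]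
  set m : ℂ → ℂ := fun ζ => (ζ - a) / (1 - conj a * ζ)
  have hmd : ∀ ζ : ℂ, ‖ζ‖ ≤ 1 → DifferentiableAt ℂ m ζ := fun ζ hζ =>
    (differentiableAt_id.sub_const a).div
      ((differentiableAt_const 1).sub (differentiableAt_id.const_mul _))
      (one_sub_conj_mul_ne_zero ha hζ)
  have hma : HasDerivAt m ((1 - ‖a‖ ^ 2 : ℝ) : ℂ)⁻¹ a := by
    have hden := one_sub_conj_mul_ne_zero ha ha.le
    refine (((hasDerivAt_id a).sub_const a).div
      (((hasDerivAt_id a).const_mul (conj a)).const_sub 1) hden).congr_deriv ?_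
    simp only [id, sub_self, zero_mul, sub_zero, mul_one, one_mul, conj_mul'] at hden ⊢
    push_cast
    field_simp
  have hud : ∀ z ∈ ball (0 : ℂ) 1, DifferentiableAt ℂ u z := fun z hz =>
    hu.differentiableAt (isOpen_ball.mem_nhds hz)
  have hmu : DifferentiableOn ℂ (m ∘ u) (ball 0 1) := fun z hz =>
    ((hmd _ (mem_ball_zero_iff.1 (hmaps hz)).le).comp z (hud z hz)).differentiableWithinAt
  have hmu0 : (m ∘ u) 0 = 0 := by simp [m, a]
  have hS : ‖deriv (m ∘ u) 0‖ ≤ 1 := by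
    refine Complex.norm_deriv_le_one_of_mapsTo_ball hmu (fun z hz => ?_) one_pos
    rw [hmu0, mem_closedBall_zero_iff]
    exact (norm_sub_div_one_sub_conj_mul_lt_one ha (mem_ball_zero_iff.1 (hmaps hz))).le
  rw [deriv_comp 0 hma.differentiableAt (hud 0 h0), hma.deriv, norm_mul, norm_inv,
    Complex.norm_real, Real.norm_of_nonneg ha'.le, inv_mul_le_iff₀ ha', mul_one] at hS
  exact hS

theorem norm_deriv_zero_le_of_mapsTo_closedBall {u : ℂ → ℂ}
    (hu : DifferentiableOn ℂ u (ball 0 1)) (hmaps : MapsTo u (ball 0 1) (closedBall 0 1)) :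
    ‖deriv u 0‖ ≤ 1 - ‖u 0‖ ^ 2 := by
  by_cases hmax : ∃ z₀ ∈ ball (0 : ℂ) 1, ‖u z₀‖ = 1
  · obtain ⟨z₀, hz₀, hu₀⟩ := hmax
    have hconst : EqOn u (fun _ => u z₀) (ball 0 1) :=
      Complex.eqOn_of_isPreconnected_of_isMaxOn_norm (convex_ball 0 1).isPreconnected
        isOpen_ball hu hz₀ fun z hz => by
          simpa [hu₀] using mem_closedBall_zero_iff.1 (hmaps hz)
    have h0 : (0 : ℂ) ∈ ball (0 : ℂ) 1 := mem_ball_self one_pos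
    rw [(hconst.eventuallyEq_of_mem (ball_mem_nhds 0 one_pos)).deriv_eq, deriv_const, hconst h0]
    simp [hu₀]
  · push Not at hmax
    refine norm_deriv_zero_le_of_mapsTo_ball hu fun z hz => mem_ball_zero_iff.2 ?_
    exact (mem_closedBall_zero_iff.1 (hmaps hz)).lt_of_ne (hmax z hz)

theorem norm_taylorCoeff_two_le {v : ℂ → ℂ} (hv : DifferentiableOn ℂ v (ball 0 1))
    (hmaps : MapsTo v (ball 0 1) (ball (v 0) 1)) :
    ‖taylorCoeff 2 v‖ ≤ 1 - ‖taylorCoeff 1 v‖ ^ 2 := by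
  have hS : MapsTo (dslope v 0) (ball 0 1) (closedBall 0 1) := fun z hz =>
    mem_closedBall_zero_iff.2 <| (Complex.norm_dslope_le_div_of_mapsTo_ball hv
      (hmaps.mono_right ball_subset_closedBall) hz).trans_eq (div_one 1)
  rw [taylorCoeff_two, taylorCoeff_one, ← dslope_same v]
  exact norm_deriv_zero_le_of_mapsTo_closedBall
    ((Complex.differentiableOn_dslope (ball_mem_nhds 0 one_pos)).2 hv) hS

end Schwarz

section Starlike

theorem ne_zero_of_half_lt_re {p : ℂ} (hp : 1 / 2 < p.re) : p ≠ 0 := by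
  rintro rfl
  norm_num at hp

theorem norm_inv_sub_one_lt_one {p : ℂ} (hp : 1 / 2 < p.re) : ‖p⁻¹ - 1‖ < 1 := by
  have hp0 := ne_zero_of_half_lt_re hp
  rw [show p⁻¹ - 1 = (1 - p) / p by field_simp, norm_div, div_lt_one (norm_pos_iff.2 hp0)]
  refine lt_of_pow_lt_pow_left₀ 2 (norm_nonneg _) ?_
  have key : ‖p‖ ^ 2 - ‖1 - p‖ ^ 2 = 2 * p.re - 1 := by
    simp only [← Complex.normSq_eq_norm_sq, normSq_apply, sub_re, sub_im, one_re, one_im]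
    ring
  linarith

variable {g : ℂ → ℂ}

theorem half_lt_re_deriv_div_dslope (hg0 : g 0 = 0) (hg1 : deriv g 0 = 1)
    (hstar : ∀ z ∈ ball (0 : ℂ) 1, z ≠ 0 → 1 / 2 < (z * deriv g z / g z).re) :
    ∀ z ∈ ball (0 : ℂ) 1, 1 / 2 < (deriv g z / dslope g 0 z).re := by
  intro z hz
  rcases eq_or_ne z 0 with rfl | hz0
  · rw [dslope_same, hg1]
    norm_num
  · have h := hstar z hz hz0
    rwa [← sub_smul_dslope_of_zero hg0 z, sub_zero, smul_eq_mul, mul_div_mul_left _ _ hz0] at h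

theorem norm_two_mul_taylorCoeff_three_sub_sq_le (hg : DifferentiableOn ℂ g (ball 0 1))
    (hg0 : g 0 = 0) (hg1 : deriv g 0 = 1)
    (hstar : ∀ z ∈ ball (0 : ℂ) 1, z ≠ 0 → 1 / 2 < (z * deriv g z / g z).re) :
    ‖2 * taylorCoeff 3 g - taylorCoeff 2 g ^ 2‖ ≤ 1 := by
  have h0 : ball (0 : ℂ) 1 ∈ 𝓝 0 := ball_mem_nhds 0 one_pos
  have hre := half_lt_re_deriv_div_dslope hg0 hg1 hstar
  have hne : ∀ z ∈ ball (0 : ℂ) 1, deriv g z / dslope g 0 z ≠ 0 := fun z hz =>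
    ne_zero_of_half_lt_re (hre z hz)
  have hG : DifferentiableOn ℂ (dslope g 0) (ball 0 1) := (Complex.differentiableOn_dslope h0).2 hg
  have hg' : DifferentiableOn ℂ (deriv g) (ball 0 1) := hg.deriv isOpen_ball
  set v : ℂ → ℂ := fun z => (deriv g z / dslope g 0 z)⁻¹
  have hv : DifferentiableOn ℂ v (ball 0 1) :=
    (hg'.div hG fun z hz => (div_ne_zero_iff.1 (hne z hz)).2).inv hne
  have hv0 : v 0 = 1 := by simp [v, dslope_same, hg1]
  have hvmaps : MapsTo v (ball 0 1) (ball (v 0) 1) := fun z hz => by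
    rw [hv0, mem_ball, dist_eq_norm]
    exact norm_inv_sub_one_lt_one (hre z hz)
  have hGv : dslope g 0 =ᶠ[𝓝 0] fun z => deriv g z * v z :=
    eventually_of_mem h0 fun z hz => by
      obtain ⟨hg'z, hGz⟩ := div_ne_zero_iff.1 (hne z hz)
      simp only [v]
      field_simp
  calc ‖2 * taylorCoeff 3 g - taylorCoeff 2 g ^ 2‖ = ‖taylorCoeff 1 v ^ 2 - taylorCoeff 2 v‖ := by
        rw [two_mul_taylorCoeff_three_sub_sq_eq (hg.analyticAt h0) (hv.analyticAt h0) hg1 hv0 hGv]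
    _ ≤ ‖taylorCoeff 1 v‖ ^ 2 + ‖taylorCoeff 2 v‖ := (norm_sub_le _ _).trans_eq (by rw [norm_pow])
    _ ≤ 1 := by linarith [norm_taylorCoeff_two_le hv hvmaps]

end Starlike

theorem norm_div_three_add_add_mul_sq_le {s c₁ c₂ X : ℂ} {B : ℝ} (hB : 0 ≤ B) (hs : ‖s‖ ≤ 1)
    (hc : ‖c₂‖ ≤ 1 - ‖c₁‖ ^ 2) :
    ‖s / 3 + B * c₂ / 3 + X * c₁ ^ 2‖ ≤ 1 / 3 + max (B / 3) ‖X‖ := by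
  have hc₁ : ‖c₁‖ ^ 2 ≤ 1 := by linarith [norm_nonneg c₂]
  calc ‖s / 3 + B * c₂ / 3 + X * c₁ ^ 2‖ ≤ ‖s‖ / 3 + B * ‖c₂‖ / 3 + ‖X‖ * ‖c₁‖ ^ 2 := by
        refine (norm_add₃_le).trans_eq ?_
        simp [norm_pow, abs_of_nonneg hB]
    _ ≤ 1 / 3 + B * (1 - ‖c₁‖ ^ 2) / 3 + ‖X‖ * ‖c₁‖ ^ 2 := by gcongr
    _ ≤ 1 / 3 + max (B / 3) ‖X‖ := by
        nlinarith [mul_le_mul_of_nonneg_right (le_max_left (B / 3) ‖X‖) (sub_nonneg.2 hc₁),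
          mul_le_mul_of_nonneg_right (le_max_right (B / 3) ‖X‖) (sq_nonneg ‖c₁‖)]

theorem deriv_eventuallyEq_of_subordination {f g w φ : ℂ → ℂ} (hg0 : g 0 = 0)
    (hgne : ∀ z ∈ ball (0 : ℂ) 1, z ≠ 0 → g z ≠ 0)
    (hf1 : deriv f 0 = φ (w 0) * (deriv g 0 * deriv g 0))
    (hsub : ∀ z ∈ ball (0 : ℂ) 1, z ≠ 0 → -(z ^ 2 * deriv f z) / (g z * g (-z)) = φ (w z)) :
    deriv f =ᶠ[𝓝 0] fun z => φ (w z) * (dslope g 0 z * dslope g 0 (-z)) := by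
  refine eventuallyEq_nhds_of_eventuallyEq_nhdsNE ?_ (by rwa [neg_zero, dslope_same])
  filter_upwards [nhdsWithin_le_nhds (ball_mem_nhds (0 : ℂ) one_pos), self_mem_nhdsWithin]
    with z hz hz0
  have hz' : -z ∈ ball (0 : ℂ) 1 := by simpa using hz
  have h := hsub z hz hz0
  rw [div_eq_iff (mul_ne_zero (hgne z hz hz0) (hgne (-z) hz' (neg_ne_zero.2 hz0))),
    ← sub_smul_dslope_of_zero hg0 z, ← sub_smul_dslope_of_zero hg0 (-z)] at h
  simp only [sub_zero, smul_eq_mul] at h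
  refine mul_left_cancel₀ (pow_ne_zero 2 hz0) ?_
  linear_combination -h

theorem fekete_szego_Ks_general (f g w φ : ℂ → ℂ)
    (hf : AnalyticOnNhd ℂ f (ball (0:ℂ) 1)) (hf1 : deriv f 0 = 1)
    (hg : AnalyticOnNhd ℂ g (ball (0:ℂ) 1)) (hg0 : g 0 = 0) (hg1 : deriv g 0 = 1)
    (hstar : ∀ z ∈ ball (0:ℂ) 1, z ≠ 0 → 1 / 2 < (z * deriv g z / g z).re)
    (hw : AnalyticOnNhd ℂ w (ball (0:ℂ) 1)) (hw0 : w 0 = 0)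
    (hwb : ∀ z ∈ ball (0:ℂ) 1, ‖w z‖ < 1)
    (hφ : AnalyticOnNhd ℂ φ (ball (0:ℂ) 1)) (hφ0 : φ 0 = 1)
    (B₁ : ℝ) (hB₁ : 0 < B₁) (hB₁' : iteratedDeriv 1 φ 0 = (B₁ : ℂ))
    (B₂ : ℂ) (hB₂ : B₂ = iteratedDeriv 2 φ 0 / 2)
    (a₂ a₃ : ℂ)
    (ha₂ : a₂ = iteratedDeriv 2 f 0 / 2)
    (ha₃ : a₃ = iteratedDeriv 3 f 0 / 6)
    (hsub : ∀ z ∈ ball (0:ℂ) 1, z ≠ 0 →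
      -(z ^ 2 * deriv f z) / (g z * g (-z)) = φ (w z)) :
    ∀ μ : ℂ, ‖a₃ - μ * a₂ ^ 2‖
      ≤ 1 / 3 + max (B₁ / 3) ‖(B₂ : ℂ) / 3 - μ * (B₁ : ℂ) ^ 2 / 4‖ := by
  intro μ
  have h0 : (0 : ℂ) ∈ ball (0 : ℂ) 1 := mem_ball_self one_pos
  -- `x / 0 = 0` in Lean, so `hstar` forbids zeros of `g` off the origin
  have hgne : ∀ z ∈ ball (0 : ℂ) 1, z ≠ 0 → g z ≠ 0 := fun z hz hz0 =>
    (div_ne_zero_iff.1 (ne_zero_of_half_lt_re (hstar z hz hz0))).2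
  have hG := (hg 0 h0).dslope
  have hQ : AnalyticAt ℂ (fun z => dslope g 0 z * dslope g 0 (-z)) 0 :=
    hG.mul (hG.comp_of_eq analyticAt_id.neg neg_zero)
  obtain ⟨e₂, e₃⟩ := taylorCoeff_of_deriv_eventuallyEq_comp_mul (hf 0 h0) (hφ 0 h0) (hw 0 h0) hQ
    hφ0 hw0 (by simp only [neg_zero, dslope_same, hg1, mul_one]) (taylorCoeff_one_mul_comp_neg hG)
    (deriv_eventuallyEq_of_subordination hg0 hgne (by rw [hf1, hg1, hw0, hφ0]; ring) hsub)
  have hφ₁ : taylorCoeff 1 φ = B₁ := by rw [taylorCoeff_one, ← iteratedDeriv_one, hB₁']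
  have hφ₂ : B₂ = taylorCoeff 2 φ := by rw [hB₂, (hφ 0 h0).taylorCoeff_eq]; norm_num
  have hf₂ : a₂ = taylorCoeff 2 f := by rw [ha₂, (hf 0 h0).taylorCoeff_eq]; norm_num
  have hf₃ : a₃ = taylorCoeff 3 f := by
    rw [ha₃, (hf 0 h0).taylorCoeff_eq]; norm_num [Nat.factorial]
  calc ‖a₃ - μ * a₂ ^ 2‖ = ‖(2 * taylorCoeff 3 g - taylorCoeff 2 g ^ 2) / 3 +
        B₁ * taylorCoeff 2 w / 3 + (B₂ / 3 - μ * B₁ ^ 2 / 4) * taylorCoeff 1 w ^ 2‖ := by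
        rw [hf₂, hf₃, hφ₂, ← hφ₁, ← taylorCoeff_two_dslope_mul_dslope_neg (hg 0 h0) hg1]
        congr 1
        linear_combination e₃ / 3 -
          μ * (taylorCoeff 2 f + taylorCoeff 1 φ * taylorCoeff 1 w / 2) / 2 * e₂
    _ ≤ _ := norm_div_three_add_add_mul_sq_le hB₁.le
        (norm_two_mul_taylorCoeff_three_sub_sq_le hg.differentiableOn hg0 hg1 hstar)
        (norm_taylorCoeff_two_le hw.differentiableOn
          (by rw [hw0]; exact fun z hz => mem_ball_zero_iff.2 (hwb z hz)))

theorem fekete_szego_Ks (f g w φ : ℂ → ℂ)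
    (hf : AnalyticOnNhd ℂ f (ball (0:ℂ) 1)) (hf0 : f 0 = 0) (hf1 : deriv f 0 = 1)
    (hg : AnalyticOnNhd ℂ g (ball (0:ℂ) 1)) (hg0 : g 0 = 0) (hg1 : deriv g 0 = 1)
    (hstar : ∀ z ∈ ball (0:ℂ) 1, z ≠ 0 → 1 / 2 < (z * deriv g z / g z).re)
    (hw : AnalyticOnNhd ℂ w (ball (0:ℂ) 1)) (hw0 : w 0 = 0)
    (hwb : ∀ z ∈ ball (0:ℂ) 1, ‖w z‖ < 1)
    (hφ : AnalyticOnNhd ℂ φ (ball (0:ℂ) 1)) (hφ0 : φ 0 = 1)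
    (B₁ : ℝ) (hB₁ : 0 < B₁) (hB₁' : iteratedDeriv 1 φ 0 = (B₁ : ℂ))
    (B₂ : ℂ) (hB₂ : B₂ = iteratedDeriv 2 φ 0 / 2)
    (a₂ a₃ : ℂ)
    (ha₂ : a₂ = iteratedDeriv 2 f 0 / 2)
    (ha₃ : a₃ = iteratedDeriv 3 f 0 / 6)
    (hsub : ∀ z ∈ ball (0:ℂ) 1, z ≠ 0 →
      -(z ^ 2 * deriv f z) / (g z * g (-z)) = φ (w z)) :
    ∀ μ : ℂ, ‖a₃ - μ * a₂ ^ 2‖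
      ≤ 1 / 3 + max (B₁ / 3) ‖(B₂ : ℂ) / 3 - μ * (B₁ : ℂ) ^ 2 / 4‖ :=
  fekete_szego_Ks_general f g w φ hf hf1 hg hg0 hg1 hstar hw hw0 hwb hφ hφ0 B₁ hB₁ hB₁' B₂ hB₂ a₂ a₃
    ha₂ ha₃ hsub
end

section
/- Let f ∈ K_s(φ) (i.e., f analytic normalized on 𝔻 with -z²f'(z)/(g(z)g(-z)) = φ(w(z)) for some g starlike of order 1/2 and Schwarz function w, where φ(z)=1+B₁z+B₂z²+⋯, B₁>0). Then the Taylor coefficients d₂, d₃ of the inverse function f⁻¹ satisfy, for every μ ∈ ℂ, |d₃ - μd₂²| ≤ 1/3 + max(B₁/3, |B₂/3 - (2-μ)B₁²/4|). -/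
/-!
Write `g z = z ψ z` with `ψ = dslope g 0`. Since `g z g (-z) = -z² V z` for the even function
`V z = ψ z ψ (-z)`, the subordination says `f' = (φ ∘ w) V`. With `w = c₁ z + c₂ z² + ⋯` and
`V = 1 + V₂ z² + ⋯` this gives `2 a₂ = B₁ c₁` and `3 a₃ = B₁ c₂ + B₂ c₁² + V₂`, while the inverse
has `d₂ = -a₂` and `d₃ = 2 a₂² - a₃`. Hence
`d₃ - μ d₂² = -V₂ / 3 - (B₁ c₂ + s c₁²) / 3` with `s = B₂ - 3 (2 - μ) B₁² / 4`.

`V₂` is also the second coefficient of `p = z g' / g = 1 + z ψ' / ψ`, and `Re p > 1/2` means that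
`(p - 1) / p` is a Schwarz function, so `|V₂| ≤ 1`. The Schwarz–Pick bound `|c₂| ≤ 1 - |c₁|²`
makes `|B₁ c₂ + s c₁²|` at most a convex combination of `B₁` and `|s|`.
-/

open Complex ComplexConjugate Metric Filter Set Topology

section Calculus

variable {𝕜 : Type*} [NontriviallyNormedField 𝕜] [CompleteSpace 𝕜] {f g φ w : 𝕜 → 𝕜}
  {x : 𝕜}

theorem AnalyticAt.deriv_deriv_mul (hf : AnalyticAt 𝕜 f x) (hg : AnalyticAt 𝕜 g x) :
    deriv (deriv fun y => f y * g y) x =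
      deriv (deriv f) x * g x + 2 * (deriv f x * deriv g x) + f x * deriv (deriv g) x := by
  have h : deriv (fun y => f y * g y) =ᶠ[𝓝 x] fun y => deriv f y * g y + f y * deriv g y := by
    filter_upwards [hf.eventually_analyticAt, hg.eventually_analyticAt] with y hfy hgy
    exact deriv_fun_mul hfy.differentiableAt hgy.differentiableAt
  have hf' := hf.deriv.differentiableAt
  have hg' := hg.deriv.differentiableAt
  rw [h.deriv_eq,
    deriv_fun_add (hf'.fun_mul hg.differentiableAt) (hf.differentiableAt.fun_mul hg'),
    deriv_fun_mul hf' hg.differentiableAt, deriv_fun_mul hf.differentiableAt hg']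
  ring

theorem AnalyticAt.deriv_comp_eventuallyEq (hφ : AnalyticAt 𝕜 φ (w x))
    (hw : AnalyticAt 𝕜 w x) :
    deriv (fun y => φ (w y)) =ᶠ[𝓝 x] fun y => deriv φ (w y) * deriv w y := by
  filter_upwards [hw.continuousAt.eventually hφ.eventually_analyticAt, hw.eventually_analyticAt]
    with y hφy hwy
  exact deriv_comp (h₂ := φ) y hφy.differentiableAt hwy.differentiableAt

theorem AnalyticAt.deriv_deriv_comp (hφ : AnalyticAt 𝕜 φ (w x)) (hw : AnalyticAt 𝕜 w x) :
    deriv (deriv fun y => φ (w y)) x =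
      deriv (deriv φ) (w x) * deriv w x ^ 2 + deriv φ (w x) * deriv (deriv w) x := by
  have hφw : AnalyticAt 𝕜 (fun y => deriv φ (w y)) x := hφ.deriv.comp hw
  have hφ'w : deriv (fun y => deriv φ (w y)) x = deriv (deriv φ) (w x) * deriv w x :=
    deriv_comp x hφ.deriv.differentiableAt hw.differentiableAt
  rw [(hφ.deriv_comp_eventuallyEq hw).deriv_eq,
    deriv_fun_mul hφw.differentiableAt hw.deriv.differentiableAt, hφ'w]
  ring

theorem AnalyticAt.deriv_deriv_deriv_comp (hφ : AnalyticAt 𝕜 φ (w x))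
    (hw : AnalyticAt 𝕜 w x) :
    deriv (deriv (deriv fun y => φ (w y))) x =
      deriv (deriv (deriv φ)) (w x) * deriv w x ^ 3
        + 3 * (deriv (deriv φ) (w x) * deriv w x * deriv (deriv w) x)
        + deriv φ (w x) * deriv (deriv (deriv w)) x := by
  have hφw : AnalyticAt 𝕜 (fun y => deriv φ (w y)) x := hφ.deriv.comp hw
  have hφ'w : deriv (fun y => deriv φ (w y)) x = deriv (deriv φ) (w x) * deriv w x :=
    deriv_comp x hφ.deriv.differentiableAt hw.differentiableAt
  rw [(hφ.deriv_comp_eventuallyEq hw).deriv.deriv_eq, hφw.deriv_deriv_mul hw.deriv,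
    hφ.deriv.deriv_deriv_comp hw, hφ'w]
  ring

end Calculus

section LeftInverse

variable {𝕜 : Type*} [NontriviallyNormedField 𝕜] {f g : 𝕜 → 𝕜} {x : 𝕜}

theorem deriv_eq_one_of_eventually_leftInverse (hg : DifferentiableAt 𝕜 g (f x))
    (hf : DifferentiableAt 𝕜 f x) (hinv : ∀ᶠ y in 𝓝 x, g (f y) = y) (hf' : deriv f x = 1) :
    deriv g (f x) = 1 := by
  have h : (fun y => g (f y)) =ᶠ[𝓝 x] fun y => y := hinv
  have := deriv_comp x hg hf
  rw [Function.comp_def, h.deriv_eq, hf', deriv_id'', mul_one] at this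
  exact this.symm

variable [CompleteSpace 𝕜]

theorem deriv_deriv_eq_neg_of_eventually_leftInverse (hg : AnalyticAt 𝕜 g (f x))
    (hf : AnalyticAt 𝕜 f x) (hinv : ∀ᶠ y in 𝓝 x, g (f y) = y) (hf' : deriv f x = 1) :
    deriv (deriv g) (f x) = -deriv (deriv f) x := by
  have h : (fun y => g (f y)) =ᶠ[𝓝 x] fun y => y := hinv
  have := hg.deriv_deriv_comp hf
  rw [h.deriv.deriv_eq, hf', deriv_eq_one_of_eventually_leftInverse hg.differentiableAt
    hf.differentiableAt hinv hf'] at this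
  simp only [deriv_id'', deriv_const'] at this
  linear_combination -this

theorem deriv_deriv_deriv_eq_of_eventually_leftInverse (hg : AnalyticAt 𝕜 g (f x))
    (hf : AnalyticAt 𝕜 f x) (hinv : ∀ᶠ y in 𝓝 x, g (f y) = y) (hf' : deriv f x = 1) :
    deriv (deriv (deriv g)) (f x) = 3 * deriv (deriv f) x ^ 2 - deriv (deriv (deriv f)) x := by
  have h : (fun y => g (f y)) =ᶠ[𝓝 x] fun y => y := hinv
  have := hg.deriv_deriv_deriv_comp hf
  rw [h.deriv.deriv.deriv_eq, hf', deriv_eq_one_of_eventually_leftInverse hg.differentiableAt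
    hf.differentiableAt hinv hf',
    deriv_deriv_eq_neg_of_eventually_leftInverse hg hf hinv hf'] at this
  simp only [deriv_id'', deriv_const'] at this
  linear_combination -this

end LeftInverse

section EvenProduct

variable {𝕜 : Type*} [NontriviallyNormedField 𝕜] {ψ : 𝕜 → 𝕜}

theorem deriv_mul_comp_neg_zero (hψ : DifferentiableAt 𝕜 ψ 0) :
    deriv (fun z => ψ z * ψ (-z)) 0 = 0 := by
  have hψ' : DifferentiableAt 𝕜 (fun z => ψ (-z)) 0 :=
    differentiableAt_comp_neg.mpr (by simpa using hψ)
  rw [deriv_fun_mul hψ hψ', deriv_comp_neg, neg_zero]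
  ring

theorem AnalyticAt.comp_neg_zero (hψ : AnalyticAt 𝕜 ψ 0) :
    AnalyticAt 𝕜 (fun z => ψ (-z)) 0 :=
  (by simpa using hψ : AnalyticAt 𝕜 ψ (-0)).comp analyticAt_id.neg

theorem AnalyticAt.mul_comp_neg (hψ : AnalyticAt 𝕜 ψ 0) :
    AnalyticAt 𝕜 (fun z => ψ z * ψ (-z)) 0 :=
  hψ.mul hψ.comp_neg_zero

variable [CompleteSpace 𝕜]

theorem AnalyticAt.deriv_deriv_mul_comp_neg (hψ : AnalyticAt 𝕜 ψ 0) :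
    deriv (deriv fun z => ψ z * ψ (-z)) 0 =
      2 * (ψ 0 * deriv (deriv ψ) 0 - deriv ψ 0 ^ 2) := by
  have hψ' := hψ.comp_neg_zero
  have hd : deriv (fun z => ψ (-z)) = fun z => -deriv ψ (-z) :=
    funext fun _ => deriv_comp_neg _ _
  rw [hψ.deriv_deriv_mul hψ', hd, deriv.fun_neg, deriv_comp_neg]
  simp only [neg_zero, neg_neg]
  ring

theorem deriv_deriv_of_deriv_eventuallyEq_comp_mul_mul_comp_neg {f φ w : 𝕜 → 𝕜}
    (h : deriv f =ᶠ[𝓝 0] fun z => φ (w z) * (ψ z * ψ (-z)))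
    (hφ : AnalyticAt 𝕜 φ 0) (hφ0 : φ 0 = 1) (hw : AnalyticAt 𝕜 w 0) (hw0 : w 0 = 0)
    (hψ : AnalyticAt 𝕜 ψ 0) (hψ0 : ψ 0 = 1) :
    deriv (deriv f) 0 = deriv φ 0 * deriv w 0 ∧
      deriv (deriv (deriv f)) 0 = deriv (deriv φ) 0 * deriv w 0 ^ 2
        + deriv φ 0 * deriv (deriv w) 0 + deriv (deriv fun z => ψ z * ψ (-z)) 0 := by
  rw [← hw0] at hφ
  have hu : AnalyticAt 𝕜 (fun z => φ (w z)) 0 := hφ.comp hw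
  have hu₁ : deriv (fun z => φ (w z)) 0 = deriv φ (w 0) * deriv w 0 :=
    deriv_comp 0 hφ.differentiableAt hw.differentiableAt
  have hV1 := deriv_mul_comp_neg_zero hψ.differentiableAt
  constructor
  · rw [h.deriv_eq, deriv_fun_mul hu.differentiableAt hψ.mul_comp_neg.differentiableAt, hV1,
      hu₁, neg_zero, hψ0, hw0]
    ring
  · rw [h.deriv.deriv_eq, hu.deriv_deriv_mul hψ.mul_comp_neg, hφ.deriv_deriv_comp hw, hu₁,
      hV1, neg_zero, hψ0, hw0, hφ0]
    ring

end EvenProduct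

section LogDeriv

variable {𝕜 : Type*} [NontriviallyNormedField 𝕜]

theorem mul_dslope_zero {f : 𝕜 → 𝕜} (hf0 : f 0 = 0) (z : 𝕜) : z * dslope f 0 z = f z := by
  simpa [hf0] using sub_smul_dslope f 0 z

theorem mul_deriv_div_eq_one_add_mul_logDeriv_dslope {g : 𝕜 → 𝕜} {z : 𝕜} (hg0 : g 0 = 0)
    (hψ : DifferentiableAt 𝕜 (dslope g 0) z) (hz : z ≠ 0) (hψz : dslope g 0 z ≠ 0) :
    z * deriv g z / g z = 1 + z * logDeriv (dslope g 0) z := by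
  have hg : g = fun x => x * dslope g 0 x := (funext (mul_dslope_zero hg0)).symm
  conv_lhs => rw [hg, deriv_fun_mul differentiableAt_fun_id hψ]
  rw [logDeriv_apply]
  field_simp
  simp

theorem AnalyticAt.deriv_deriv_one_add_mul_logDeriv [CompleteSpace 𝕜] {ψ : 𝕜 → 𝕜}
    (hψ : AnalyticAt 𝕜 ψ 0) (hψ0 : ψ 0 = 1) :
    deriv (deriv fun z => 1 + z * logDeriv ψ z) 0 =
      2 * (deriv (deriv ψ) 0 - deriv ψ 0 ^ 2) := by
  have hψ0' : ψ 0 ≠ 0 := by simp [hψ0]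
  have hlog : AnalyticAt 𝕜 (logDeriv ψ) 0 := hψ.deriv.div hψ hψ0'
  rw [deriv_const_add', AnalyticAt.deriv_deriv_mul (f := fun z => z) analyticAt_id hlog,
    logDeriv, deriv_div hψ.deriv.differentiableAt hψ.differentiableAt hψ0', hψ0]
  simp [sq]

end LogDeriv

theorem norm_sub_le_norm_one_sub_conj_mul {a z : ℂ} (ha : ‖a‖ ≤ 1) (hz : ‖z‖ ≤ 1) :
    ‖z - a‖ ≤ ‖1 - conj a * z‖ := by
  have key : normSq (1 - conj a * z) - normSq (z - a) = (1 - normSq a) * (1 - normSq z) := by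
    simp only [normSq_apply, sub_re, sub_im, mul_re, mul_im, one_re, one_im, conj_re, conj_im]
    ring
  have ha' : normSq a ≤ 1 := by rw [← Complex.sq_norm]; nlinarith [norm_nonneg a]
  have hz' : normSq z ≤ 1 := by rw [← Complex.sq_norm]; nlinarith [norm_nonneg z]
  rw [norm_def, norm_def]
  exact Real.sqrt_le_sqrt (by nlinarith)

theorem norm_deriv_zero_le_one_sub_sq_of_norm_lt_one {ψ : ℂ → ℂ}
    (hψ : DifferentiableOn ℂ ψ (ball 0 1)) (hmaps : MapsTo ψ (ball 0 1) (closedBall 0 1))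
    (ha : ‖ψ 0‖ < 1) : ‖deriv ψ 0‖ ≤ 1 - ‖ψ 0‖ ^ 2 := by
  have h0 : (0 : ℂ) ∈ ball (0 : ℂ) 1 := mem_ball_self one_pos
  have hψle : ∀ z ∈ ball (0 : ℂ) 1, ‖ψ z‖ ≤ 1 := fun z hz => by simpa using hmaps hz
  set a := ψ 0 with ha_def
  -- `ψ` followed by the disc automorphism sending `a` to `0` still satisfies Schwarz's lemma
  have hden : ∀ z ∈ ball (0 : ℂ) 1, 1 - conj a * ψ z ≠ 0 := by
    intro z hz h
    have : ‖conj a * ψ z‖ < 1 := by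
      rw [norm_mul, norm_conj]
      nlinarith [hψle z hz, norm_nonneg a, norm_nonneg (ψ z)]
    rw [← sub_eq_zero.mp h, norm_one] at this
    exact this.false
  have hΦ : DifferentiableOn ℂ (fun z => (ψ z - a) / (1 - conj a * ψ z)) (ball 0 1) :=
    (hψ.sub_const a).div ((differentiableOn_const 1).sub (hψ.const_mul _)) hden
  have hΦmaps : MapsTo (fun z => (ψ z - a) / (1 - conj a * ψ z)) (ball 0 1)
      (closedBall ((ψ 0 - a) / (1 - conj a * ψ 0)) 1) := by
    intro z hz
    rw [← ha_def, sub_self, zero_div, mem_closedBall_zero_iff, norm_div,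
      div_le_one (norm_pos_iff.mpr (hden z hz))]
    exact norm_sub_le_norm_one_sub_conj_mul ha.le (hψle z hz)
  have hψ' : DifferentiableAt ℂ ψ 0 := hψ.differentiableAt (ball_mem_nhds 0 one_pos)
  have hpos : 0 < 1 - ‖a‖ ^ 2 := by nlinarith [norm_nonneg a]
  have hderiv : deriv (fun z => (ψ z - a) / (1 - conj a * ψ z)) 0
      = deriv ψ 0 / ((1 - ‖a‖ ^ 2 : ℝ) : ℂ) := by
    have hD : 1 - conj a * a = ((1 - ‖a‖ ^ 2 : ℝ) : ℂ) := by
      rw [conj_mul']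
      push_cast
      ring
    have : ((1 - ‖a‖ ^ 2 : ℝ) : ℂ) ≠ 0 := mod_cast hpos.ne'
    rw [deriv_fun_div (hψ'.sub_const a) ((hψ'.const_mul _).const_sub 1) (hden 0 h0),
      deriv_sub_const, ← ha_def, hD]
    field_simp
    ring
  have := norm_deriv_le_one_of_mapsTo_ball hΦ hΦmaps one_pos
  rwa [hderiv, norm_div, norm_real, Real.norm_of_nonneg hpos.le, div_le_one hpos] at this

theorem norm_deriv_zero_le_one_sub_sq {ψ : ℂ → ℂ}
    (hψ : DifferentiableOn ℂ ψ (ball 0 1)) (hmaps : MapsTo ψ (ball 0 1) (closedBall 0 1)) :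
    ‖deriv ψ 0‖ ≤ 1 - ‖ψ 0‖ ^ 2 := by
  have h0 : (0 : ℂ) ∈ ball (0 : ℂ) 1 := mem_ball_self one_pos
  have hψle : ∀ z ∈ ball (0 : ℂ) 1, ‖ψ z‖ ≤ 1 := fun z hz => by simpa using hmaps hz
  rcases (hψle 0 h0).eq_or_lt with ha | ha
  · have hconst : EqOn ψ (fun _ => ψ 0) (ball 0 1) :=
      eqOn_of_isPreconnected_of_isMaxOn_norm (convex_ball 0 1).isPreconnected isOpen_ball hψ h0
        fun z hz => (hψle z hz).trans ha.ge
    rw [(hconst.eventuallyEq_of_mem (ball_mem_nhds 0 one_pos)).deriv_eq, ha]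
    simp
  · exact norm_deriv_zero_le_one_sub_sq_of_norm_lt_one hψ hmaps ha

theorem differentiableOn_dslope_zero_ball {f : ℂ → ℂ}
    (hf : DifferentiableOn ℂ f (ball 0 1)) :
    DifferentiableOn ℂ (dslope f 0) (ball 0 1) :=
  (differentiableOn_dslope (ball_mem_nhds 0 one_pos)).mpr hf

theorem norm_deriv_deriv_zero_div_two_le_one_sub_sq {w : ℂ → ℂ}
    (hw : DifferentiableOn ℂ w (ball 0 1)) (hw0 : w 0 = 0)
    (hmaps : MapsTo w (ball 0 1) (ball 0 1)) :
    ‖deriv (deriv w) 0 / 2‖ ≤ 1 - ‖deriv w 0‖ ^ 2 := by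
  set ψ := dslope w 0
  have hψ := differentiableOn_dslope_zero_ball hw
  have hψ0 : AnalyticAt ℂ ψ 0 := hψ.analyticOnNhd isOpen_ball 0 (mem_ball_self one_pos)
  have hw2 : deriv (deriv w) 0 / 2 = deriv ψ 0 := by
    rw [← funext (mul_dslope_zero hw0),
      AnalyticAt.deriv_deriv_mul (f := fun y => y) analyticAt_id hψ0]
    simp
  have hψmaps : MapsTo ψ (ball 0 1) (closedBall 0 1) := fun z hz => by
    simpa using norm_dslope_le_div_of_mapsTo_ball hw
      (by rw [hw0]; exact hmaps.mono_right ball_subset_closedBall) hz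
  rw [hw2, ← dslope_same w 0]
  exact norm_deriv_zero_le_one_sub_sq hψ hψmaps

theorem norm_sub_one_lt_norm_of_half_lt_re {p : ℂ} (h : 1 / 2 < p.re) : ‖p - 1‖ < ‖p‖ := by
  have : normSq (p - 1) < normSq p := by
    simp only [normSq_apply, sub_re, sub_im, one_re, one_im]
    nlinarith
  rw [norm_def, norm_def]
  exact Real.sqrt_lt_sqrt (normSq_nonneg _) this

theorem norm_deriv_deriv_zero_div_two_le_one_of_half_lt_re {p : ℂ → ℂ}
    (hp : DifferentiableOn ℂ p (ball 0 1)) (hp0 : p 0 = 1)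
    (hre : ∀ z ∈ ball (0 : ℂ) 1, 1 / 2 < (p z).re) : ‖deriv (deriv p) 0 / 2‖ ≤ 1 := by
  have h0 : (0 : ℂ) ∈ ball (0 : ℂ) 1 := mem_ball_self one_pos
  have hpne : ∀ z ∈ ball (0 : ℂ) 1, p z ≠ 0 := fun z hz h => by
    simpa [h] using (hre z hz).trans' (by norm_num : (0 : ℝ) < 1 / 2)
  -- `Re p > 1/2` says exactly that `ω = (p - 1) / p` is a Schwarz function
  set ω : ℂ → ℂ := fun z => (p z - 1) / p z
  have hω : DifferentiableOn ℂ ω (ball 0 1) := (hp.sub_const 1).div hp hpne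
  have hω0 : ω 0 = 0 := by simp [ω, hp0]
  have hωmaps : MapsTo ω (ball 0 1) (ball 0 1) := fun z hz => by
    rw [mem_ball_zero_iff, norm_div, div_lt_one (norm_pos_iff.mpr (hpne z hz))]
    exact norm_sub_one_lt_norm_of_half_lt_re (hre z hz)
  have hpan : AnalyticAt ℂ p 0 := hp.analyticOnNhd isOpen_ball 0 h0
  have hωan : AnalyticAt ℂ (fun z => 1 - ω z) 0 :=
    analyticAt_const.fun_sub (hω.analyticOnNhd isOpen_ball 0 h0)
  have hprod : (fun z => p z * (1 - ω z)) =ᶠ[𝓝 0] fun _ => 1 := by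
    filter_upwards [isOpen_ball.mem_nhds h0] with z hz
    have := hpne z hz
    simp only [ω]
    field_simp
    ring
  have h1 : deriv p 0 = deriv ω 0 := by
    have := hprod.deriv_eq
    rw [deriv_fun_mul hpan.differentiableAt hωan.differentiableAt, deriv_const_sub, hω0, hp0,
      deriv_const] at this
    linear_combination this
  have h2 : deriv (deriv p) 0 = deriv (deriv ω) 0 + 2 * deriv ω 0 ^ 2 := by
    have := hprod.deriv.deriv_eq
    rw [hpan.deriv_deriv_mul hωan] at this
    simp only [deriv_const_sub', deriv.fun_neg, deriv_const', hω0, hp0, h1] at this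
    linear_combination this
  have hω2 := norm_deriv_deriv_zero_div_two_le_one_sub_sq hω hω0 hωmaps
  calc ‖deriv (deriv p) 0 / 2‖ ≤ ‖deriv (deriv ω) 0 / 2‖ + ‖deriv ω 0‖ ^ 2 := by
        rw [h2, add_div, mul_div_cancel_left₀ _ two_ne_zero, ← norm_pow]
        exact norm_add_le _ _
    _ ≤ 1 := by linarith

section Starlike

variable {g : ℂ → ℂ}

theorem dslope_zero_ne_zero_of_half_lt_re (hg0 : g 0 = 0) (hg1 : deriv g 0 = 1)
    (hstar : ∀ z ∈ ball (0 : ℂ) 1, z ≠ 0 → 1 / 2 < (z * deriv g z / g z).re) :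
    ∀ z ∈ ball (0 : ℂ) 1, dslope g 0 z ≠ 0 := by
  intro z hz hψz
  rcases eq_or_ne z 0 with rfl | hz0
  · simp [hg1] at hψz
  · have := hstar z hz hz0
    rw [← mul_dslope_zero hg0 z, hψz] at this
    norm_num at this

theorem norm_deriv_deriv_dslope_mul_comp_neg_div_two_le_one
    (hg : DifferentiableOn ℂ g (ball 0 1)) (hg0 : g 0 = 0) (hg1 : deriv g 0 = 1)
    (hstar : ∀ z ∈ ball (0 : ℂ) 1, z ≠ 0 → 1 / 2 < (z * deriv g z / g z).re) :
    ‖deriv (deriv fun z => dslope g 0 z * dslope g 0 (-z)) 0 / 2‖ ≤ 1 := by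
  have hψ := differentiableOn_dslope_zero_ball hg
  have hψne := dslope_zero_ne_zero_of_half_lt_re hg0 hg1 hstar
  have hψ0 : dslope g 0 0 = 1 := by rw [dslope_same, hg1]
  have hψan : AnalyticAt ℂ (dslope g 0) 0 :=
    hψ.analyticOnNhd isOpen_ball 0 (mem_ball_self one_pos)
  -- `p` is `z g'/g`, extended across `z = 0`
  set p : ℂ → ℂ := fun z => 1 + z * logDeriv (dslope g 0) z
  have hp : DifferentiableOn ℂ p (ball 0 1) :=
    (differentiableOn_id.mul ((hψ.deriv isOpen_ball).div hψ hψne)).const_add 1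
  have hre : ∀ z ∈ ball (0 : ℂ) 1, 1 / 2 < (p z).re := by
    intro z hz
    rcases eq_or_ne z 0 with rfl | hz0
    · norm_num [p]
    · show 1 / 2 < (1 + z * logDeriv (dslope g 0) z).re
      rw [← mul_deriv_div_eq_one_add_mul_logDeriv_dslope hg0
        (hψ.differentiableAt (isOpen_ball.mem_nhds hz)) hz0 (hψne z hz)]
      exact hstar z hz hz0
  have := norm_deriv_deriv_zero_div_two_le_one_of_half_lt_re hp (by simp [p]) hre
  rwa [hψan.deriv_deriv_one_add_mul_logDeriv hψ0, ← one_mul (deriv (deriv (dslope g 0)) 0),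
    ← hψ0, ← hψan.deriv_deriv_mul_comp_neg] at this

end Starlike

theorem deriv_eventuallyEq_comp_mul_dslope_mul_comp_neg {f g w φ : ℂ → ℂ}
    (hf : AnalyticAt ℂ f 0) (hg0 : g 0 = 0) (hψ : AnalyticAt ℂ (dslope g 0) 0)
    (hψne : ∀ z ∈ ball (0 : ℂ) 1, dslope g 0 z ≠ 0) (hw : AnalyticAt ℂ w 0)
    (hφ : AnalyticAt ℂ φ (w 0))
    (hsub : ∀ z ∈ ball (0 : ℂ) 1, z ≠ 0 → -(z ^ 2 * deriv f z) / (g z * g (-z)) = φ (w z)) :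
    deriv f =ᶠ[𝓝 0] fun z => φ (w z) * (dslope g 0 z * dslope g 0 (-z)) := by
  have hcont : ContinuousAt (fun z => φ (w z) * (dslope g 0 z * dslope g 0 (-z))) 0 :=
    ((hφ.comp hw).mul hψ.mul_comp_neg).continuousAt
  rw [← hf.deriv.continuousAt.eventuallyEq_nhds_iff_eventuallyEq_nhdsNE hcont]
  filter_upwards [nhdsWithin_le_nhds (ball_mem_nhds (0 : ℂ) one_pos), self_mem_nhdsWithin]
    with z hz (hz0 : z ≠ 0)
  have h₁ := hψne z hz
  have h₂ := hψne (-z) (by simpa using hz)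
  rw [← hsub z hz hz0, ← mul_dslope_zero hg0 z, ← mul_dslope_zero hg0 (-z)]
  field_simp

theorem norm_mul_add_mul_sq_le_max {b : ℝ} (hb : 0 ≤ b) {c₁ c₂ t : ℂ}
    (hc : ‖c₂‖ ≤ 1 - ‖c₁‖ ^ 2) : ‖b * c₂ + t * c₁ ^ 2‖ ≤ max b ‖t‖ := by
  have hc₁ : 0 ≤ 1 - ‖c₁‖ ^ 2 := (norm_nonneg c₂).trans hc
  calc ‖b * c₂ + t * c₁ ^ 2‖ ≤ b * (1 - ‖c₁‖ ^ 2) + ‖t‖ * ‖c₁‖ ^ 2 := by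
        refine (norm_add_le _ _).trans ?_
        rw [norm_mul, norm_mul, norm_pow, norm_real, Real.norm_of_nonneg hb]
        gcongr
    _ ≤ max b ‖t‖ * (1 - ‖c₁‖ ^ 2) + max b ‖t‖ * ‖c₁‖ ^ 2 := by
        gcongr
        · exact le_max_left _ _
        · exact le_max_right _ _
    _ = max b ‖t‖ := by ring

theorem norm_fekete_szego_functional_le {B₁ : ℝ} (hB₁ : 0 ≤ B₁) {B₂ c₁ c₂ v : ℂ}
    (hc : ‖c₂‖ ≤ 1 - ‖c₁‖ ^ 2) (hv : ‖v‖ ≤ 1) (μ : ℂ) :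
    ‖(2 - μ) * (B₁ * c₁ / 2) ^ 2 - (B₂ * c₁ ^ 2 + B₁ * c₂ + v) / 3‖
      ≤ 1 / 3 + max (B₁ / 3) ‖B₂ / 3 - (2 - μ) * (B₁ : ℂ) ^ 2 / 4‖ := by
  set t := B₂ / 3 - (2 - μ) * (B₁ : ℂ) ^ 2 / 4
  calc ‖(2 - μ) * (B₁ * c₁ / 2) ^ 2 - (B₂ * c₁ ^ 2 + B₁ * c₂ + v) / 3‖
        = ‖-(v / 3) - (((B₁ / 3 : ℝ) : ℂ) * c₂ + t * c₁ ^ 2)‖ := by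
        congr 1
        push_cast
        ring
    _ ≤ ‖v / 3‖ + ‖((B₁ / 3 : ℝ) : ℂ) * c₂ + t * c₁ ^ 2‖ := by
        simpa using norm_sub_le (-(v / 3)) _
    _ ≤ 1 / 3 + max (B₁ / 3) ‖t‖ := by
        gcongr
        · rw [norm_div, RCLike.norm_ofNat]
          linarith
        · exact norm_mul_add_mul_sq_le_max (by positivity) hc

theorem fekete_szego_inverse_Ks_general (f g w φ finv : ℂ → ℂ)
    (hf : AnalyticOnNhd ℂ f (ball (0:ℂ) 1)) (hf0 : f 0 = 0) (hf1 : deriv f 0 = 1)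
    (hg : AnalyticOnNhd ℂ g (ball (0:ℂ) 1)) (hg0 : g 0 = 0) (hg1 : deriv g 0 = 1)
    (hstar : ∀ z ∈ ball (0:ℂ) 1, z ≠ 0 → 1 / 2 < (z * deriv g z / g z).re)
    (hw : AnalyticOnNhd ℂ w (ball (0:ℂ) 1)) (hw0 : w 0 = 0)
    (hwb : ∀ z ∈ ball (0:ℂ) 1, ‖w z‖ < 1)
    (hφ : AnalyticOnNhd ℂ φ (ball (0:ℂ) 1)) (hφ0 : φ 0 = 1)
    (B₁ : ℝ) (hB₁ : 0 < B₁) (hB₁' : iteratedDeriv 1 φ 0 = (B₁ : ℂ))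
    (B₂ : ℂ) (hB₂ : B₂ = iteratedDeriv 2 φ 0 / 2)
    (hsub : ∀ z ∈ ball (0:ℂ) 1, z ≠ 0 →
      -(z ^ 2 * deriv f z) / (g z * g (-z)) = φ (w z))
    (hfinv : AnalyticAt ℂ finv 0)
    (hleft : ∀ᶠ z in nhds (0:ℂ), finv (f z) = z)
    (d₂ d₃ : ℂ) (hd₂ : d₂ = iteratedDeriv 2 finv 0 / 2) (hd₃ : d₃ = iteratedDeriv 3 finv 0 / 6) :
    ∀ μ : ℂ, ‖d₃ - μ * d₂ ^ 2‖
      ≤ 1 / 3 + max (B₁ / 3) ‖B₂ / 3 - (2 - μ) * (B₁ : ℂ) ^ 2 / 4‖ := by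
  intro μ
  have h0 : (0 : ℂ) ∈ ball (0 : ℂ) 1 := mem_ball_self one_pos
  have hψ : AnalyticAt ℂ (dslope g 0) 0 :=
    (differentiableOn_dslope_zero_ball hg.differentiableOn).analyticOnNhd isOpen_ball 0 h0
  have hfV := deriv_eventuallyEq_comp_mul_dslope_mul_comp_neg (hf 0 h0) hg0 hψ
    (dslope_zero_ne_zero_of_half_lt_re hg0 hg1 hstar) (hw 0 h0) (by rw [hw0]; exact hφ 0 h0) hsub
  obtain ⟨hf₂, hf₃⟩ := deriv_deriv_of_deriv_eventuallyEq_comp_mul_mul_comp_neg hfV (hφ 0 h0)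
    hφ0 (hw 0 h0) hw0 hψ (by rw [dslope_same, hg1])
  have hfinv' : AnalyticAt ℂ finv (f 0) := by rwa [hf0]
  have hd₂' := deriv_deriv_eq_neg_of_eventually_leftInverse hfinv' (hf 0 h0) hleft hf1
  have hd₃' := deriv_deriv_deriv_eq_of_eventually_leftInverse hfinv' (hf 0 h0) hleft hf1
  rw [hf0] at hd₂' hd₃'
  have hw₂ := norm_deriv_deriv_zero_div_two_le_one_sub_sq hw.differentiableOn hw0
    fun z hz => mem_ball_zero_iff.mpr (hwb z hz)
  have hV₂ :=
    norm_deriv_deriv_dslope_mul_comp_neg_div_two_le_one hg.differentiableOn hg0 hg1 hstar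
  convert norm_fekete_szego_functional_le hB₁.le hw₂ hV₂ μ using 2
  simp only [← hB₁', hB₂, hd₂, hd₃, iteratedDeriv_succ, iteratedDeriv_zero, hd₂', hd₃', hf₂,
    hf₃]
  ring

theorem fekete_szego_inverse_Ks (f g w φ finv : ℂ → ℂ)
    (hf : AnalyticOnNhd ℂ f (ball (0:ℂ) 1)) (hf0 : f 0 = 0) (hf1 : deriv f 0 = 1)
    (hinj : Set.InjOn f (ball (0:ℂ) 1))
    (hg : AnalyticOnNhd ℂ g (ball (0:ℂ) 1)) (hg0 : g 0 = 0) (hg1 : deriv g 0 = 1)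
    (hstar : ∀ z ∈ ball (0:ℂ) 1, z ≠ 0 → 1 / 2 < (z * deriv g z / g z).re)
    (hw : AnalyticOnNhd ℂ w (ball (0:ℂ) 1)) (hw0 : w 0 = 0)
    (hwb : ∀ z ∈ ball (0:ℂ) 1, ‖w z‖ < 1)
    (hφ : AnalyticOnNhd ℂ φ (ball (0:ℂ) 1)) (hφ0 : φ 0 = 1)
    (B₁ : ℝ) (hB₁ : 0 < B₁) (hB₁' : iteratedDeriv 1 φ 0 = (B₁ : ℂ))
    (B₂ : ℂ) (hB₂ : B₂ = iteratedDeriv 2 φ 0 / 2)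
    (hsub : ∀ z ∈ ball (0:ℂ) 1, z ≠ 0 →
      -(z ^ 2 * deriv f z) / (g z * g (-z)) = φ (w z))
    (hfinv : AnalyticAt ℂ finv 0)
    (hleft : ∀ᶠ z in nhds (0:ℂ), finv (f z) = z)
    (d₂ d₃ : ℂ) (hd₂ : d₂ = iteratedDeriv 2 finv 0 / 2) (hd₃ : d₃ = iteratedDeriv 3 finv 0 / 6) :
    ∀ μ : ℂ, ‖d₃ - μ * d₂ ^ 2‖
      ≤ 1 / 3 + max (B₁ / 3) ‖B₂ / 3 - (2 - μ) * (B₁ : ℂ) ^ 2 / 4‖ :=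
  fekete_szego_inverse_Ks_general f g w φ finv hf hf0 hf1 hg hg0 hg1 hstar hw hw0 hwb hφ hφ0 B₁ hB₁
    hB₁' B₂ hB₂ hsub hfinv hleft d₂ d₃ hd₂ hd₃
end

section
/- Let φ be analytic on the closed conditions of the unit disk with positive real part, and suppose f is analytic and normalized on 𝔻 with -z²f'(z)/(g(z)g(-z)) = φ(w(z)) for some g starlike of order 1/2 and Schwarz function w. Then for |z| = r < 1, |f'(z)| ≤ M(r)/(1-r²), where M(r) = max_{|ζ|=r} |φ(ζ)|. -/
open Complex Metric Filter Topology Set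

/-!
Write `F(z) = -g(z) g(-z) / z²`, so that `f' = (φ ∘ w) · F` on the disc (off `0` by hypothesis,
at `0` by continuity). Schwarz's lemma gives `‖w z‖ ≤ r`, and the maximum modulus principle then
bounds `‖φ (w z)‖` by `M`.

Starlikeness of order `1/2` of `g` gives `Re p > -1` for `p = z F'/F`. As `p` is even and vanishes
at `0`, the Schwarz lemma applied to the even self-map `p / (p + 2)` of the disc gives
`‖p z‖ ≤ 2‖z‖² / (1 - ‖z‖²)`. Along the ray `s ↦ s z` this bound makes
`‖F (s z)‖ (1 - s² ‖z‖²)` nonincreasing, whence `‖F z‖ ≤ 1 / (1 - r²)`.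
-/

theorem Function.Even.deriv {𝕜 F : Type*} [NontriviallyNormedField 𝕜] [NormedAddCommGroup F]
    [NormedSpace 𝕜 F] {f : 𝕜 → F} (hf : f.Even) : (deriv f).Odd := fun x => by
  have h := deriv_comp_neg (f := f) (x := x)
  rw [show (fun y => f (-y)) = f from funext hf] at h
  rw [h, neg_neg]

theorem Function.Even.logDeriv {𝕜 𝕜' : Type*} [NontriviallyNormedField 𝕜]
    [NontriviallyNormedField 𝕜'] [NormedAlgebra 𝕜 𝕜'] {f : 𝕜 → 𝕜'} (hf : f.Even) :
    (logDeriv f).Odd := fun x => by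
  simp only [logDeriv_apply, hf.deriv x, hf x, neg_div]

theorem Complex.inner_eq_norm_sq_mul_re_div (w z : ℂ) : inner ℝ w z = ‖w‖ ^ 2 * (z / w).re := by
  rcases eq_or_ne w 0 with rfl | hw
  · simp
  rw [Complex.inner, ← re_ofReal_mul, ofReal_pow, ← mul_conj']
  congr 1
  field_simp

theorem norm_le_sq_of_even_of_mapsTo_ball {ω : ℂ → ℂ} {ζ : ℂ}
    (hd : DifferentiableOn ℂ ω (ball 0 1)) (hmaps : MapsTo ω (ball 0 1) (closedBall 0 1))
    (h0 : ω 0 = 0) (heven : ω.Even) (hζ : ‖ζ‖ < 1) :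
    ‖ω ζ‖ ≤ ‖ζ‖ ^ 2 := by
  have hderiv : HasDerivAt ω 0 0 := by
    have := (hd.differentiableAt (isOpen_ball.mem_nhds (mem_ball_self one_pos))).hasDerivAt
    rwa [heven.deriv.map_zero] at this
  have hlittle : (ω · - ω 0) =o[𝓝 0] (fun x => ‖x - 0‖ ^ 1) := by
    simpa using (hasDerivAt_iff_isLittleO.mp hderiv).norm_right
  have := dist_le_mul_div_pow_of_mapsTo_ball_of_isLittleO hd (by rwa [h0]) hlittle
    (mem_ball_zero_iff.mpr hζ)
  simp only [h0, dist_zero_right, div_one, one_mul] at this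
  exact this

theorem norm_div_add_two_lt_one {a : ℂ} (ha : -1 < a.re) : ‖a / (a + 2)‖ < 1 := by
  have hlt : ‖a‖ < ‖a + 2‖ := by
    rw [← sq_lt_sq₀ (norm_nonneg _) (norm_nonneg _), Complex.sq_norm, Complex.sq_norm,
      normSq_apply, normSq_apply]
    simp only [add_re, add_im, re_ofNat, im_ofNat]
    nlinarith
  rw [norm_div, div_lt_one ((norm_nonneg a).trans_lt hlt)]
  exact hlt

theorem norm_le_of_norm_div_add_two_le {a : ℂ} {t : ℝ} (ht : t < 1) (h : ‖a / (a + 2)‖ ≤ t)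
    (ha : a + 2 ≠ 0) : ‖a‖ ≤ 2 * t / (1 - t) := by
  have hpos : 0 < ‖a + 2‖ := norm_pos_iff.mpr ha
  rw [norm_div, div_le_iff₀ hpos] at h
  have ht0 : 0 ≤ t := nonneg_of_mul_nonneg_left ((norm_nonneg a).trans h) hpos
  have htri : ‖a + 2‖ ≤ ‖a‖ + 2 := by simpa using norm_add_le a 2
  rw [le_div_iff₀ (by linarith)]
  nlinarith [mul_le_mul_of_nonneg_left htri ht0]

theorem norm_le_of_even_of_neg_one_lt_re {p : ℂ → ℂ} {ζ : ℂ}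
    (hd : DifferentiableOn ℂ p (ball 0 1)) (h0 : p 0 = 0) (heven : p.Even)
    (hre : ∀ ξ ∈ ball (0 : ℂ) 1, -1 < (p ξ).re) (hζ : ‖ζ‖ < 1) :
    ‖p ζ‖ ≤ 2 * ‖ζ‖ ^ 2 / (1 - ‖ζ‖ ^ 2) := by
  have hne : ∀ ξ ∈ ball (0 : ℂ) 1, p ξ + 2 ≠ 0 := fun ξ hξ h => by
    have := congrArg re h
    simp only [add_re, re_ofNat, zero_re] at this
    linarith [hre ξ hξ]
  have hω : ‖p ζ / (p ζ + 2)‖ ≤ ‖ζ‖ ^ 2 :=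
    norm_le_sq_of_even_of_mapsTo_ball (ω := fun ξ => p ξ / (p ξ + 2))
      (hd.div (hd.add_const 2) hne)
      (fun ξ hξ => mem_closedBall_zero_iff.mpr (norm_div_add_two_lt_one (hre ξ hξ)).le)
      (by simp [h0]) (fun ξ => by simp only [heven ξ]) hζ
  exact norm_le_of_norm_div_add_two_le (by nlinarith [norm_nonneg ζ]) hω
    (hne ζ (mem_ball_zero_iff.mpr hζ))

theorem norm_le_of_forall_norm_eq_le {E : Type*} [NormedAddCommGroup E] [NormedSpace ℂ E]
    {φ : ℂ → E} {r M : ℝ} {ζ : ℂ} (hφ : DifferentiableOn ℂ φ (ball 0 1)) (hr : r < 1)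
    (hM : ∀ ξ : ℂ, ‖ξ‖ = r → ‖φ ξ‖ ≤ M) (hζ : ‖ζ‖ ≤ r) : ‖φ ζ‖ ≤ M := by
  rcases hζ.eq_or_lt with h | h
  · exact hM ζ h
  refine Complex.norm_le_of_forall_mem_frontier_norm_le isBounded_ball
    (hφ.mono (closure_ball_subset_closedBall.trans (closedBall_subset_ball hr))).diffContOnCl
    (fun ξ hξ => hM ξ ?_) (subset_closure (mem_ball_zero_iff.mpr h))
  simpa using frontier_ball_subset_sphere hξ

theorem inner_mul_one_sub_sq_le {F : ℂ → ℂ} {z : ℂ} {s : ℝ} (hs : 0 < s)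
    (hsz : ‖(s : ℂ) * z‖ < 1)
    (hre : ((s * z) * logDeriv F (s * z)).re ≤ 2 * ‖(s : ℂ) * z‖ ^ 2 / (1 - ‖(s : ℂ) * z‖ ^ 2)) :
    inner ℝ (F (s * z)) (deriv F (s * z) * z) * (1 - s ^ 2 * ‖z‖ ^ 2) ≤
      ‖F (s * z)‖ ^ 2 * (2 * s * ‖z‖ ^ 2) := by
  have hnorm : ‖(s : ℂ) * z‖ = s * ‖z‖ := by
    rw [norm_mul, norm_real, Real.norm_of_nonneg hs.le]
  rw [hnorm] at hsz hre
  have h1 : 0 < 1 - s ^ 2 * ‖z‖ ^ 2 := by nlinarith [mul_nonneg hs.le (norm_nonneg z)]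
  have hlog : ((s : ℂ) * z * logDeriv F (s * z)).re = s * (deriv F (s * z) * z / F (s * z)).re := by
    rw [logDeriv_apply, ← re_ofReal_mul]
    ring_nf
  rw [hlog, mul_pow, le_div_iff₀ h1] at hre
  rw [inner_eq_norm_sq_mul_re_div, mul_assoc]
  have : (deriv F (s * z) * z / F (s * z)).re * (1 - s ^ 2 * ‖z‖ ^ 2) ≤ 2 * s * ‖z‖ ^ 2 := by
    nlinarith
  exact mul_le_mul_of_nonneg_left this (sq_nonneg _)

theorem antitoneOn_norm_sq_mul_one_sub_sq {F : ℂ → ℂ} {z : ℂ}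
    (hd : DifferentiableOn ℂ F (ball 0 1))
    (hre : ∀ ζ ∈ ball (0 : ℂ) 1, (ζ * logDeriv F ζ).re ≤ 2 * ‖ζ‖ ^ 2 / (1 - ‖ζ‖ ^ 2))
    (hz : ‖z‖ < 1) :
    AntitoneOn (fun s : ℝ => ‖F (s * z)‖ ^ 2 * (1 - s ^ 2 * ‖z‖ ^ 2) ^ 2) (Icc 0 1) := by
  have hmem : ∀ s ∈ Icc (0 : ℝ) 1, (s : ℂ) * z ∈ ball (0 : ℂ) 1 := fun s hs => by
    rw [mem_ball_zero_iff, norm_mul, norm_real, Real.norm_of_nonneg hs.1]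
    nlinarith [hs.2, norm_nonneg z]
  have hFc : ContinuousOn (fun s : ℝ => F (s * z)) (Icc 0 1) :=
    hd.continuousOn.comp (by fun_prop) hmem
  refine antitoneOn_of_hasDerivWithinAt_nonpos (convex_Icc 0 1) ((hFc.norm.pow 2).mul (by fun_prop))
    (f' := fun s => 2 * inner ℝ (F (s * z)) (deriv F (s * z) * z) * (1 - s ^ 2 * ‖z‖ ^ 2) ^ 2 +
      ‖F (s * z)‖ ^ 2 * (2 * (1 - s ^ 2 * ‖z‖ ^ 2) * -(2 * s * ‖z‖ ^ 2))) ?_ ?_ <;>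
    rw [interior_Icc] <;> intro s hs <;> have hsz := hmem s (Ioo_subset_Icc_self hs)
  · have hF : HasDerivAt F (deriv F (s * z)) (s * z) :=
      (hd.differentiableAt (isOpen_ball.mem_nhds hsz)).hasDerivAt
    have hG : HasDerivAt (fun t : ℝ => F (t * z)) (deriv F (s * z) * z) s :=
      (hF.comp (s : ℂ) (hasDerivAt_mul_const z)).comp_ofReal
    have hw : HasDerivAt (fun t : ℝ => 1 - t ^ 2 * ‖z‖ ^ 2) (-(2 * s * ‖z‖ ^ 2)) s := by
      simpa using ((hasDerivAt_pow 2 s).mul_const (‖z‖ ^ 2)).const_sub 1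
    exact (hG.norm_sq.mul (hw.pow 2)).hasDerivWithinAt.congr_deriv
      (by simp only [Pi.pow_apply]; ring)
  · have h1 : 0 < 1 - s ^ 2 * ‖z‖ ^ 2 := by
      rw [mem_ball_zero_iff, norm_mul, norm_real, Real.norm_of_nonneg hs.1.le] at hsz
      nlinarith [mul_nonneg hs.1.le (norm_nonneg z)]
    have := inner_mul_one_sub_sq_le hs.1 (mem_ball_zero_iff.mp hsz) (hre _ hsz)
    nlinarith [mul_le_mul_of_nonneg_left this (mul_nonneg zero_le_two h1.le)]

theorem norm_le_div_one_sub_sq_of_re_mul_logDeriv_le {F : ℂ → ℂ} {z : ℂ}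
    (hd : DifferentiableOn ℂ F (ball 0 1))
    (hre : ∀ ζ ∈ ball (0 : ℂ) 1, (ζ * logDeriv F ζ).re ≤ 2 * ‖ζ‖ ^ 2 / (1 - ‖ζ‖ ^ 2))
    (hz : ‖z‖ < 1) :
    ‖F z‖ ≤ ‖F 0‖ / (1 - ‖z‖ ^ 2) := by
  have h10 := antitoneOn_norm_sq_mul_one_sub_sq hd hre hz (left_mem_Icc.mpr zero_le_one)
    (right_mem_Icc.mpr zero_le_one) zero_le_one
  simp only [ofReal_one, one_mul, ofReal_zero, zero_mul, zero_pow two_ne_zero, sub_zero,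
    mul_one, ← mul_pow] at h10
  have h1 : 0 < 1 - ‖z‖ ^ 2 := by nlinarith [norm_nonneg z]
  rw [le_div_iff₀ h1]
  exact (pow_le_pow_iff_left₀ (by positivity) (norm_nonneg _) two_ne_zero).mp h10

theorem norm_le_div_one_sub_sq_of_even {F : ℂ → ℂ} {z : ℂ}
    (hF : AnalyticOnNhd ℂ F (ball 0 1)) (hne : ∀ ζ ∈ ball (0 : ℂ) 1, F ζ ≠ 0) (heven : F.Even)
    (hre : ∀ ζ ∈ ball (0 : ℂ) 1, -1 < (ζ * logDeriv F ζ).re) (hz : ‖z‖ < 1) :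
    ‖F z‖ ≤ ‖F 0‖ / (1 - ‖z‖ ^ 2) := by
  have hd : DifferentiableOn ℂ (fun ζ => ζ * logDeriv F ζ) (ball 0 1) :=
    differentiableOn_id.mul (hF.deriv.differentiableOn.div hF.differentiableOn hne)
  refine norm_le_div_one_sub_sq_of_re_mul_logDeriv_le hF.differentiableOn
    (fun ζ hζ => (re_le_norm _).trans ?_) hz
  exact norm_le_of_even_of_neg_one_lt_re hd (zero_mul _)
    (fun ζ => by simp only [heven.logDeriv ζ, neg_mul_neg]) hre (mem_ball_zero_iff.mp hζ)

/-- `-g(z) g(-z) / z²`, continued across `0`. -/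
noncomputable def dslopeMulNeg (g : ℂ → ℂ) (z : ℂ) : ℂ := dslope g 0 z * dslope g 0 (-z)

theorem dslopeMulNeg_even (g : ℂ → ℂ) : (dslopeMulNeg g).Even := fun z => by
  simp only [dslopeMulNeg, neg_neg, mul_comm]

theorem dslopeMulNeg_zero (g : ℂ → ℂ) : dslopeMulNeg g 0 = deriv g 0 ^ 2 := by
  simp [dslopeMulNeg, sq]

theorem mul_comp_neg_eq_neg_sq_mul_dslopeMulNeg {g : ℂ → ℂ} (hg0 : g 0 = 0) (z : ℂ) :
    g z * g (-z) = -(z ^ 2 * dslopeMulNeg g z) := by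
  have h : ∀ x, g x = x * dslope g 0 x := fun x => by
    simpa [hg0] using (sub_smul_dslope g 0 x).symm
  rw [h z, h (-z), dslopeMulNeg]
  ring

theorem analyticOnNhd_dslopeMulNeg {g : ℂ → ℂ} (hg : AnalyticOnNhd ℂ g (ball 0 1)) :
    AnalyticOnNhd ℂ (dslopeMulNeg g) (ball 0 1) := by
  have h : DifferentiableOn ℂ (dslope g 0) (ball 0 1) :=
    (differentiableOn_dslope (isOpen_ball.mem_nhds (mem_ball_self one_pos))).mpr
      hg.differentiableOn
  have hneg : DifferentiableOn ℂ (fun z => dslope g 0 (-z)) (ball 0 1) :=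
    h.comp (differentiableOn_neg _) fun z hz => by simpa using hz
  exact (h.mul hneg).analyticOnNhd isOpen_ball

theorem mul_logDeriv_div_self {g : ℂ → ℂ} {z : ℂ} (hd : DifferentiableAt ℂ g z) (hz : z ≠ 0)
    (hgz : g z ≠ 0) : z * logDeriv (fun x => g x / x) z = z * logDeriv g z - 1 := by
  have hid : logDeriv (fun x : ℂ => x) z = 1 / z := logDeriv_id z
  rw [logDeriv_div (g := fun x => x) z hgz hz hd differentiableAt_id, hid, mul_sub,
    mul_one_div_cancel hz]

theorem mul_logDeriv_comp_neg {q : ℂ → ℂ} {z : ℂ} (hd : DifferentiableAt ℂ q (-z)) :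
    z * logDeriv (fun x => q (-x)) z = -z * logDeriv q (-z) := by
  rw [← Function.comp_def, logDeriv_comp hd differentiableAt_id.neg, deriv_neg'']
  ring

theorem mul_logDeriv_dslopeMulNeg {g : ℂ → ℂ} {z : ℂ} (hg0 : g 0 = 0) (hz : z ≠ 0)
    (hdz : DifferentiableAt ℂ g z) (hdnz : DifferentiableAt ℂ g (-z))
    (hgz : g z ≠ 0) (hgnz : g (-z) ≠ 0) :
    z * logDeriv (dslopeMulNeg g) z = z * logDeriv g z + -z * logDeriv g (-z) - 2 := by
  have hnz : -z ≠ 0 := neg_ne_zero.mpr hz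
  have hev : dslopeMulNeg g =ᶠ[𝓝 z] fun x => g x / x * (g (-x) / -x) := by
    filter_upwards [isOpen_ne.mem_nhds hz] with x hx
    simp [dslopeMulNeg, dslope_of_ne _ hx, dslope_of_ne _ (neg_ne_zero.mpr hx), slope_def_field,
      hg0]
  rw [(logDeriv_congr_nhds hev).eq_of_nhds,
    logDeriv_mul (f := fun x => g x / x) (g := fun x => g (-x) / -x) z (div_ne_zero hgz hz)
      (div_ne_zero hgnz hnz) (hdz.div differentiableAt_id hz)
      ((hdnz.comp z differentiableAt_id.neg).div differentiableAt_id.neg hnz),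
    mul_add, mul_logDeriv_div_self hdz hz hgz,
    mul_logDeriv_comp_neg (q := fun x => g x / x) (hdnz.div differentiableAt_id hnz),
    mul_logDeriv_div_self hdnz hnz hgnz]
  ring

theorem apply_ne_zero_of_half_lt_re {g : ℂ → ℂ} {z : ℂ} (h : 1 / 2 < (z * deriv g z / g z).re) :
    g z ≠ 0 := fun hgz => by
  simp only [hgz, div_zero, zero_re] at h
  linarith

theorem dslopeMulNeg_ne_zero {g : ℂ → ℂ} {z : ℂ} (hg0 : g 0 = 0) (hg1 : deriv g 0 ≠ 0)
    (hstar : ∀ z ∈ ball (0 : ℂ) 1, z ≠ 0 → 1 / 2 < (z * deriv g z / g z).re)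
    (hz : z ∈ ball (0 : ℂ) 1) : dslopeMulNeg g z ≠ 0 := by
  have h : ∀ x ∈ ball (0 : ℂ) 1, dslope g 0 x ≠ 0 := fun x hx => by
    rcases eq_or_ne x 0 with rfl | hx0
    · rwa [dslope_same]
    · rw [dslope_of_ne _ hx0, slope_def_field, hg0, sub_zero, sub_zero]
      exact div_ne_zero (apply_ne_zero_of_half_lt_re (hstar x hx hx0)) hx0
  exact mul_ne_zero (h z hz) (h (-z) (by simpa using hz))

theorem neg_one_lt_re_mul_logDeriv_dslopeMulNeg {g : ℂ → ℂ} {z : ℂ}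
    (hg : AnalyticOnNhd ℂ g (ball 0 1)) (hg0 : g 0 = 0)
    (hstar : ∀ z ∈ ball (0 : ℂ) 1, z ≠ 0 → 1 / 2 < (z * deriv g z / g z).re)
    (hz : z ∈ ball (0 : ℂ) 1) : -1 < (z * logDeriv (dslopeMulNeg g) z).re := by
  rcases eq_or_ne z 0 with rfl | hz0
  · simp
  have hnz : -z ∈ ball (0 : ℂ) 1 := by simpa using hz
  have h₁ := hstar z hz hz0
  have h₂ := hstar (-z) hnz (neg_ne_zero.mpr hz0)
  rw [mul_logDeriv_dslopeMulNeg hg0 hz0 (hg z hz).differentiableAt (hg _ hnz).differentiableAt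
    (apply_ne_zero_of_half_lt_re h₁) (apply_ne_zero_of_half_lt_re h₂)]
  rw [mul_div_assoc, ← logDeriv_apply] at h₁ h₂
  simp only [sub_re, add_re, re_ofNat]
  linarith

theorem deriv_eqOn_comp_mul_dslopeMulNeg {f g w φ : ℂ → ℂ}
    (hf : AnalyticOnNhd ℂ f (ball (0 : ℂ) 1)) (hg : AnalyticOnNhd ℂ g (ball (0 : ℂ) 1))
    (hg0 : g 0 = 0) (hne : ∀ z ∈ ball (0 : ℂ) 1, dslopeMulNeg g z ≠ 0)
    (hw : AnalyticOnNhd ℂ w (ball (0 : ℂ) 1)) (hwb : ∀ z ∈ ball (0 : ℂ) 1, ‖w z‖ < 1)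
    (hφ : AnalyticOnNhd ℂ φ (ball (0 : ℂ) 1))
    (hsub : ∀ z ∈ ball (0 : ℂ) 1, z ≠ 0 → -(z ^ 2 * deriv f z) / (g z * g (-z)) = φ (w z)) :
    EqOn (deriv f) (fun z => φ (w z) * dslopeMulNeg g z) (ball 0 1) := by
  refine EqOn.of_subset_closure (s := ball 0 1 ∩ {0}ᶜ) ?_ hf.deriv.continuousOn ?_
    inter_subset_left ((dense_compl_singleton 0).open_subset_closure_inter isOpen_ball)
  · rintro z ⟨hz, hz0⟩
    have := hsub z hz hz0
    rw [mul_comp_neg_eq_neg_sq_mul_dslopeMulNeg hg0, neg_div_neg_eq,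
      mul_div_mul_left _ _ (pow_ne_zero 2 hz0)] at this
    show deriv f z = φ (w z) * _
    rw [← this, div_mul_cancel₀ _ (hne z hz)]
  · exact (hφ.continuousOn.comp hw.continuousOn fun z hz => mem_ball_zero_iff.mpr (hwb z hz)).mul
      (analyticOnNhd_dslopeMulNeg hg).continuousOn

theorem distortion_upper_Ks_general (f g w φ : ℂ → ℂ)
    (hf : AnalyticOnNhd ℂ f (ball (0:ℂ) 1))
    (hg : AnalyticOnNhd ℂ g (ball (0:ℂ) 1)) (hg0 : g 0 = 0) (hg1 : deriv g 0 = 1)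
    (hstar : ∀ z ∈ ball (0:ℂ) 1, z ≠ 0 → 1 / 2 < (z * deriv g z / g z).re)
    (hw : AnalyticOnNhd ℂ w (ball (0:ℂ) 1)) (hw0 : w 0 = 0)
    (hwb : ∀ z ∈ ball (0:ℂ) 1, ‖w z‖ < 1)
    (hφ : AnalyticOnNhd ℂ φ (ball (0:ℂ) 1))
    (hsub : ∀ z ∈ ball (0:ℂ) 1, z ≠ 0 →
      -(z ^ 2 * deriv f z) / (g z * g (-z)) = φ (w z))
    (r : ℝ) (hr : r < 1) (z : ℂ) (hz : ‖z‖ = r)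
    (M : ℝ) (hM : IsGreatest {x : ℝ | ∃ ζ : ℂ, ‖ζ‖ = r ∧ x = ‖φ ζ‖} M) :
    ‖deriv f z‖ ≤ M / (1 - r ^ 2) := by
  have hz1 : ‖z‖ < 1 := hz ▸ hr
  have hne : ∀ ζ ∈ ball (0 : ℂ) 1, dslopeMulNeg g ζ ≠ 0 := fun ζ hζ =>
    dslopeMulNeg_ne_zero hg0 (hg1 ▸ one_ne_zero) hstar hζ
  have hwz : ‖w z‖ ≤ r := hz ▸ norm_le_norm_of_mapsTo_ball hw.differentiableOn
    (fun ζ hζ => mem_closedBall_zero_iff.mpr (hwb ζ hζ).le) hw0 hz1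
  have hφw : ‖φ (w z)‖ ≤ M :=
    norm_le_of_forall_norm_eq_le hφ.differentiableOn hr (fun ξ hξ => hM.2 ⟨ξ, hξ, rfl⟩) hwz
  have hF : ‖dslopeMulNeg g z‖ ≤ 1 / (1 - r ^ 2) := by
    simpa [dslopeMulNeg_zero, hg1, hz] using
      norm_le_div_one_sub_sq_of_even (analyticOnNhd_dslopeMulNeg hg) hne (dslopeMulNeg_even g)
        (fun ζ hζ => neg_one_lt_re_mul_logDeriv_dslopeMulNeg hg hg0 hstar hζ) hz1
  rw [deriv_eqOn_comp_mul_dslopeMulNeg hf hg hg0 hne hw hwb hφ hsub (mem_ball_zero_iff.mpr hz1),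
    norm_mul, ← mul_one_div]
  exact mul_le_mul hφw hF (norm_nonneg _) ((norm_nonneg _).trans hφw)

theorem distortion_upper_Ks (f g w φ : ℂ → ℂ)
    (hf : AnalyticOnNhd ℂ f (ball (0:ℂ) 1)) (hf0 : f 0 = 0) (hf1 : deriv f 0 = 1)
    (hg : AnalyticOnNhd ℂ g (ball (0:ℂ) 1)) (hg0 : g 0 = 0) (hg1 : deriv g 0 = 1)
    (hstar : ∀ z ∈ ball (0:ℂ) 1, z ≠ 0 → 1 / 2 < (z * deriv g z / g z).re)
    (hw : AnalyticOnNhd ℂ w (ball (0:ℂ) 1)) (hw0 : w 0 = 0)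
    (hwb : ∀ z ∈ ball (0:ℂ) 1, ‖w z‖ < 1)
    (hφ : AnalyticOnNhd ℂ φ (ball (0:ℂ) 1)) (hφre : ∀ z ∈ ball (0:ℂ) 1, 0 < (φ z).re)
    (hsub : ∀ z ∈ ball (0:ℂ) 1, z ≠ 0 →
      -(z ^ 2 * deriv f z) / (g z * g (-z)) = φ (w z))
    (r : ℝ) (hr : r < 1) (z : ℂ) (hz : ‖z‖ = r)
    (M : ℝ) (hM : IsGreatest {x : ℝ | ∃ ζ : ℂ, ‖ζ‖ = r ∧ x = ‖φ ζ‖} M) :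
    ‖deriv f z‖ ≤ M / (1 - r ^ 2) :=
  distortion_upper_Ks_general f g w φ hf hg hg0 hg1 hstar hw hw0 hwb hφ hsub r hr z hz M hM
end

section
/- The function g₁(z) = z/√(1+z²) (principal branch) is analytic on the unit disk, normalized, and starlike of order 1/2, and it satisfies -g₁(z)g₁(-z)/z = z/(1+z²). -/
/-!
Writing `w = 1 + z²`, one has `(√w)² = w` and `(√w)' = z / √w`, so `g₁' = 1 / (w √w)` and
`z g₁'(z) / g₁(z) = 1 / w`. For `|z| < 1` the point `w` lies in the disk `|w - 1| < 1`, which the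
inversion `w ↦ 1 / w` maps onto the half-plane `Re > 1/2`.
-/

open Complex Metric

namespace Complex

lemma half_lt_re_inv_of_norm_sub_one_lt {w : ℂ} (hw : ‖w - 1‖ < 1) : 1 / 2 < (w⁻¹).re := by
  have hw0 : w ≠ 0 := by rintro rfl; simp at hw
  rw [inv_re, lt_div_iff₀ (normSq_pos.mpr hw0)]
  have h := (sq_lt_one_iff₀ (norm_nonneg _)).mpr hw
  rw [← normSq_eq_norm_sq, normSq_apply] at h
  rw [normSq_apply]
  simp only [sub_re, one_re, sub_im, one_im, sub_zero] at h
  nlinarith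

lemma one_add_sq_mem_slitPlane {z : ℂ} (hz : ‖z‖ < 1) : 1 + z ^ 2 ∈ slitPlane :=
  mem_slitPlane_of_norm_lt_one (by rwa [norm_pow, sq_lt_one_iff₀ (norm_nonneg z)])

lemma cpow_half_mul_self (w : ℂ) : w ^ (1 / 2 : ℂ) * w ^ (1 / 2 : ℂ) = w := by
  simp [← sq]

lemma cpow_half_ne_zero {w : ℂ} (hw : w ≠ 0) : w ^ (1 / 2 : ℂ) ≠ 0 := by
  simp [cpow_eq_zero_iff, hw]

lemma hasDerivAt_sqrt_one_add_sq {z : ℂ} (hz : 1 + z ^ 2 ∈ slitPlane) :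
    HasDerivAt (fun w : ℂ => (1 + w ^ 2) ^ (1 / 2 : ℂ)) (z / (1 + z ^ 2) ^ (1 / 2 : ℂ)) z := by
  have hbase : HasDerivAt (fun w : ℂ => 1 + w ^ 2) (2 * z) z := by
    simpa using ((hasDerivAt_id z).pow 2).const_add 1
  refine (hbase.cpow_const hz).congr_deriv ?_
  have hw := slitPlane_ne_zero hz
  have hH := cpow_half_ne_zero hw
  have hHH := cpow_half_mul_self (1 + z ^ 2)
  rw [cpow_sub _ _ hw, cpow_one]
  generalize (1 + z ^ 2) ^ (1 / 2 : ℂ) = H at hH hHH ⊢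
  rw [← hHH]
  field_simp

lemma hasDerivAt_div_sqrt_one_add_sq {z : ℂ} (hz : 1 + z ^ 2 ∈ slitPlane) :
    HasDerivAt (fun w : ℂ => w / (1 + w ^ 2) ^ (1 / 2 : ℂ))
      (1 / ((1 + z ^ 2) * (1 + z ^ 2) ^ (1 / 2 : ℂ))) z := by
  have hH := cpow_half_ne_zero (slitPlane_ne_zero hz)
  refine ((hasDerivAt_id z).div (hasDerivAt_sqrt_one_add_sq hz) hH).congr_deriv ?_
  have hHH := cpow_half_mul_self (1 + z ^ 2)
  generalize (1 + z ^ 2) ^ (1 / 2 : ℂ) = H at hH hHH ⊢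
  rw [id, ← hHH]
  field_simp
  linear_combination hHH

end Complex

theorem extremal_function_g1 (g₁ : ℂ → ℂ)
    (hg₁ : ∀ z : ℂ, g₁ z = z / (1 + z ^ 2) ^ ((1 : ℂ) / 2)) :
    AnalyticOnNhd ℂ g₁ (ball (0:ℂ) 1) ∧
    g₁ 0 = 0 ∧ deriv g₁ 0 = 1 ∧
    (∀ z ∈ ball (0:ℂ) 1, z ≠ 0 → 1 / 2 < (z * deriv g₁ z / g₁ z).re) ∧
    (∀ z ∈ ball (0:ℂ) 1, z ≠ 0 → -(g₁ z * g₁ (-z)) / z = z / (1 + z ^ 2)) := by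
  obtain rfl : g₁ = fun z : ℂ => z / (1 + z ^ 2) ^ ((1 : ℂ) / 2) := funext hg₁
  have hslit : ∀ z ∈ ball (0:ℂ) 1, 1 + z ^ 2 ∈ slitPlane := fun z hz =>
    one_add_sq_mem_slitPlane (mem_ball_zero_iff.mp hz)
  have hsqrt_ne : ∀ z ∈ ball (0:ℂ) 1, (1 + z ^ 2) ^ ((1 : ℂ) / 2) ≠ 0 := fun z hz =>
    cpow_half_ne_zero (slitPlane_ne_zero (hslit z hz))
  refine ⟨fun z hz => ?_, by simp, ?_, fun z hz _ => ?_, fun z hz _ => ?_⟩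
  · exact analyticAt_id.div ((analyticAt_const.add (analyticAt_id.pow 2)).cpow analyticAt_const
      (hslit z hz)) (hsqrt_ne z hz)
  · rw [(hasDerivAt_div_sqrt_one_add_sq (hslit 0 (mem_ball_self one_pos))).deriv]
    norm_num
  · have hlogderiv : z * deriv (fun z : ℂ => z / (1 + z ^ 2) ^ ((1 : ℂ) / 2)) z /
        (z / (1 + z ^ 2) ^ ((1 : ℂ) / 2)) = (1 + z ^ 2)⁻¹ := by
      rw [(hasDerivAt_div_sqrt_one_add_sq (hslit z hz)).deriv]
      field_simp [hsqrt_ne z hz, slitPlane_ne_zero (hslit z hz)]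
    rw [hlogderiv]
    apply half_lt_re_inv_of_norm_sub_one_lt
    simpa [norm_pow, sq_lt_one_iff₀ (norm_nonneg z)] using mem_ball_zero_iff.mp hz
  · have hHH := cpow_half_mul_self (1 + z ^ 2)
    have hH := hsqrt_ne z hz
    simp only [neg_sq]
    generalize (1 + z ^ 2) ^ ((1 : ℂ) / 2) = H at hH hHH ⊢
    rw [← hHH]
    field_simp
end

section
/- Let f be analytic, injective and normalized on the unit disk, and g starlike of order 1/2. Suppose there is δ > 0 such that for every t ∈ (0,δ) the function z ↦ f(z) + t·g(z)g(-z)/z (extended analytically at 0) is subordinate to f on 𝔻. Then Re(z²f'(z)/(g(z)g(-z))) < 0 for all z ∈ 𝔻 \ {0}, i.e., f ∈ K_s. -/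
/-!
For small `t > 0` write `f + t G = f ∘ ω_t`. By injectivity of `f`, `ω_t(z)` is the local
inverse of `f` applied to `f(z) + t G(z)`, a curve leaving `z` with velocity `G(z) / f'(z)`;
by the Schwarz lemma it stays in the closed disc of radius `|z|`. Hence
`Re (conj z · G(z) / f'(z)) ≤ 0`, i.e. `Re (z f'(z) / G(z)) ≤ 0`. Writing `g(z) = z h(z)` with
`h` zero-free (starlikeness forces `g ≠ 0` off the origin), `z f'(z) / G(z) = -f'(z) / (h(z) h(-z))`
is holomorphic on the disc and equals `-1` at the origin, so the maximum principle applied to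
its exponential makes the inequality strict.
-/

open Complex ComplexConjugate Metric Set Filter Topology

theorem re_conj_mul_deriv_nonpos_of_norm_le {ψ : ℝ → ℂ} {d : ℂ} (hψ : HasDerivAt ψ d 0)
    (hle : ∀ᶠ t in 𝓝[>] 0, ‖ψ t‖ ≤ ‖ψ 0‖) : (conj (ψ 0) * d).re ≤ 0 := by
  have hmax : IsLocalMaxOn (‖ψ ·‖ ^ 2) (Ioi 0) 0 :=
    hle.mono fun t ht => pow_le_pow_left₀ (norm_nonneg _) ht 2
  have hdir : (1 : ℝ) ∈ posTangentConeAt (Ioi (0 : ℝ)) 0 :=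
    mem_posTangentConeAt_of_frequently_mem <| by
      simpa using (eventually_mem_nhdsWithin (a := (0:ℝ)) (s := Ioi 0)).frequently
  have := hmax.hasFDerivWithinAt_nonpos hψ.norm_sq.hasDerivWithinAt.hasFDerivWithinAt hdir
  rw [ContinuousLinearMap.toSpanSingleton_apply, one_smul] at this
  rw [mul_comm, ← Complex.inner]
  linarith

theorem re_conj_mul_div_nonpos_of_eventually_preimage {f : ℂ → ℂ} {U : Set ℂ} {z v f' : ℂ}
    (hU : U ∈ 𝓝 z) (hinj : InjOn f U) (hf : HasStrictDerivAt f f' z) (hf' : f' ≠ 0)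
    (hpre : ∀ᶠ t : ℝ in 𝓝[>] 0, ∃ w ∈ U, ‖w‖ ≤ ‖z‖ ∧ f w = f z + t * v) :
    (conj z * (v / f')).re ≤ 0 := by
  set φ := hf.localInverse f f' z hf'
  set ψ : ℝ → ℂ := fun t => φ (f z + t * v)
  have hψ0 : ψ 0 = z := by
    simp only [ψ, ofReal_zero, zero_mul, add_zero]
    exact (hf.eventually_left_inverse hf').self_of_nhds
  have hline : HasDerivAt (fun t : ℝ => f z + t * v) v 0 := by
    simpa using ((hasDerivAt_id (0 : ℝ)).ofReal_comp.mul_const v).const_add (f z)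
  have hψ : HasDerivAt ψ (v / f') 0 := by
    rw [div_eq_inv_mul]
    exact (hf.to_localInverse hf').hasDerivAt.comp_of_eq (0 : ℝ) hline (by simp)
  have hline_tendsto : Tendsto (fun t : ℝ => f z + t * v) (𝓝[>] 0) (𝓝 (f z)) := by
    simpa using hline.continuousAt.tendsto.mono_left nhdsWithin_le_nhds
  have hψU : ∀ᶠ t in 𝓝[>] 0, ψ t ∈ U :=
    (hψ.continuousAt.tendsto.mono_left nhdsWithin_le_nhds).eventually (hψ0 ▸ hU)
  have hfψ : ∀ᶠ t in 𝓝[>] 0, f (ψ t) = f z + t * v :=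
    hline_tendsto.eventually (hf.eventually_right_inverse hf')
  rw [← hψ0]
  refine re_conj_mul_deriv_nonpos_of_norm_le hψ ?_
  filter_upwards [hpre, hψU, hfψ] with t ⟨w, hwU, hwz, hfw⟩ htU hft
  rw [hψ0, hinj htU hwU (hft.trans hfw.symm)]
  exact hwz

theorem re_mul_deriv_div_nonpos_of_subordinate {f G : ℂ → ℂ} {δ : ℝ}
    (hf : AnalyticOnNhd ℂ f (ball (0:ℂ) 1)) (hinj : InjOn f (ball (0:ℂ) 1)) (hδ : 0 < δ)
    (hsub : ∀ t ∈ Ioo (0:ℝ) δ, ∃ ω : ℂ → ℂ,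
      AnalyticOnNhd ℂ ω (ball (0:ℂ) 1) ∧ ω 0 = 0 ∧
      (∀ z ∈ ball (0:ℂ) 1, ‖ω z‖ < 1) ∧
      (∀ z ∈ ball (0:ℂ) 1, f z + (t : ℂ) * G z = f (ω z)))
    {z : ℂ} (hz : z ∈ ball (0:ℂ) 1) : (z * deriv f z / G z).re ≤ 0 := by
  rcases eq_or_ne (z * deriv f z) 0 with h0 | h0
  · simp [h0]
  rcases eq_or_ne (G z) 0 with hG | hG
  · simp [hG]
  obtain ⟨hz0, hfz⟩ := mul_ne_zero_iff.1 h0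
  have hpre : ∀ᶠ t : ℝ in 𝓝[>] 0, ∃ w ∈ ball (0:ℂ) 1, ‖w‖ ≤ ‖z‖ ∧ f w = f z + t * G z := by
    filter_upwards [Ioo_mem_nhdsGT hδ] with t ht
    obtain ⟨ω, hω, hω0, hω1, hωf⟩ := hsub t ht
    refine ⟨ω z, mem_ball_zero_iff.2 (hω1 z hz), ?_, (hωf z hz).symm⟩
    exact norm_le_norm_of_mapsTo_ball hω.differentiableOn
      (fun w hw => ball_subset_closedBall (mem_ball_zero_iff.2 (hω1 w hw))) hω0
      (mem_ball_zero_iff.1 hz)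
  have key := re_conj_mul_div_nonpos_of_eventually_preimage (isOpen_ball.mem_nhds hz) hinj
    (hf z hz).hasStrictDerivAt hfz hpre
  -- `Re a⁻¹` has the sign of `Re a`
  have hinv : z * deriv f z / G z = normSq z * (conj z * (G z / deriv f z))⁻¹ := by
    have : conj z ≠ 0 := (map_ne_zero _).2 hz0
    rw [← mul_conj]
    field_simp
  rw [hinv, re_ofReal_mul, inv_re]
  exact mul_nonpos_of_nonneg_of_nonpos (normSq_nonneg z)
    (div_nonpos_of_nonpos_of_nonneg key (normSq_nonneg _))

theorem exists_eq_mul_of_differentiableOn {g : ℂ → ℂ} {U : Set ℂ} (hU : U ∈ 𝓝 0)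
    (hg : DifferentiableOn ℂ g U) (hg0 : g 0 = 0) (hg' : deriv g 0 ≠ 0)
    (hne : ∀ w ∈ U, w ≠ 0 → g w ≠ 0) :
    ∃ h : ℂ → ℂ, DifferentiableOn ℂ h U ∧ h 0 = deriv g 0 ∧ (∀ w ∈ U, h w ≠ 0) ∧
      ∀ w, g w = w * h w := by
  have hgh : ∀ w, g w = w * dslope g 0 w := fun w => by
    simpa [hg0] using (sub_smul_dslope g 0 w).symm
  refine ⟨dslope g 0, (differentiableOn_dslope hU).2 hg, dslope_same g 0, fun w hw => ?_, hgh⟩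
  rcases eq_or_ne w 0 with rfl | hw0
  · rwa [dslope_same]
  · exact right_ne_zero_of_mul (hgh w ▸ hne w hw hw0)

theorem re_lt_zero_of_re_nonpos_of_isPreconnected {P : ℂ → ℂ} {U : Set ℂ} (hUc : IsPreconnected U)
    (hUo : IsOpen U) (hP : DifferentiableOn ℂ P U) (hle : ∀ w ∈ U, (P w).re ≤ 0) {a : ℂ}
    (ha : a ∈ U) (hPa : (P a).re < 0) {z : ℂ} (hz : z ∈ U) : (P z).re < 0 := by
  refine (hle z hz).lt_of_ne fun hPz => ?_
  have hmax : IsMaxOn (norm ∘ fun w => exp (P w)) U z := fun w hw => by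
    simp [norm_exp, hPz, hle w hw]
  have heq := eqOn_of_isPreconnected_of_isMaxOn_norm hUc hUo (fun w hw => (hP w hw).cexp) hz
    hmax ha
  have hnorm : Real.exp (P a).re = Real.exp 0 := by
    simpa [norm_exp, hPz] using congrArg norm heq
  exact hPa.ne (Real.exp_injective hnorm)

theorem exists_differentiableOn_eq_mul_deriv_div {f g G : ℂ → ℂ}
    (hf : AnalyticOnNhd ℂ f (ball (0:ℂ) 1)) (hf1 : deriv f 0 = 1)
    (hg : DifferentiableOn ℂ g (ball (0:ℂ) 1)) (hg0 : g 0 = 0) (hg1 : deriv g 0 = 1)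
    (hgne : ∀ w ∈ ball (0:ℂ) 1, w ≠ 0 → g w ≠ 0)
    (hG : ∀ z : ℂ, z ≠ 0 → G z = g z * g (-z) / z) :
    ∃ P : ℂ → ℂ, DifferentiableOn ℂ P (ball 0 1) ∧ P 0 = -1 ∧
      ∀ w ∈ ball (0:ℂ) 1, w ≠ 0 → P w = w * deriv f w / G w := by
  obtain ⟨h, hh, hh0, hhne, hgh⟩ :=
    exists_eq_mul_of_differentiableOn (ball_mem_nhds 0 one_pos) hg hg0 (by simp [hg1]) hgne
  have hneg : MapsTo (fun w : ℂ => -w) (ball 0 1) (ball 0 1) := fun w hw => by simpa using hw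
  refine ⟨fun w => -deriv f w / (h w * h (-w)), ?_, by simp [hf1, hh0, hg1], fun w hw hw0 => ?_⟩
  · exact hf.deriv.differentiableOn.neg.div (hh.mul (hh.comp (differentiableOn_neg _) hneg))
      fun w hw => mul_ne_zero (hhne w hw) (hhne _ (hneg hw))
  · have hw_ne := hhne w hw
    have hnegw_ne := hhne _ (hneg hw)
    simp only [hG w hw0, hgh w, hgh (-w)]
    field_simp

theorem subordination_implies_Ks_general (f g : ℂ → ℂ)
    (hf : AnalyticOnNhd ℂ f (ball (0:ℂ) 1)) (hf1 : deriv f 0 = 1)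
    (hinj : Set.InjOn f (ball (0:ℂ) 1))
    (hg : AnalyticOnNhd ℂ g (ball (0:ℂ) 1)) (hg0 : g 0 = 0) (hg1 : deriv g 0 = 1)
    (hstar : ∀ z ∈ ball (0:ℂ) 1, z ≠ 0 → 1 / 2 < (z * deriv g z / g z).re)
    (G : ℂ → ℂ)
    (hG : ∀ z : ℂ, z ≠ 0 → G z = g z * g (-z) / z)
    (δ : ℝ) (hδ : 0 < δ)
    (hsub : ∀ t ∈ Set.Ioo (0:ℝ) δ, ∃ ω : ℂ → ℂ,
      AnalyticOnNhd ℂ ω (ball (0:ℂ) 1) ∧ ω 0 = 0 ∧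
      (∀ z ∈ ball (0:ℂ) 1, ‖ω z‖ < 1) ∧
      (∀ z ∈ ball (0:ℂ) 1, f z + (t : ℂ) * G z = f (ω z))) :
    ∀ z ∈ ball (0:ℂ) 1, z ≠ 0 →
      (z ^ 2 * deriv f z / (g z * g (-z))).re < 0 := by
  intro z hz hz0
  have hgne : ∀ w ∈ ball (0:ℂ) 1, w ≠ 0 → g w ≠ 0 := fun w hw hw0 hgw => by
    have := hstar w hw hw0
    norm_num [hgw] at this
  obtain ⟨P, hP, hP0, hPG⟩ :=
    exists_differentiableOn_eq_mul_deriv_div hf hf1 hg.differentiableOn hg0 hg1 hgne hG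
  have hPle : ∀ w ∈ ball (0:ℂ) 1, (P w).re ≤ 0 := by
    intro w hw
    rcases eq_or_ne w 0 with rfl | hw0
    · simp [hP0]
    · rw [hPG w hw hw0]
      exact re_mul_deriv_div_nonpos_of_subordinate hf hinj hδ hsub hw
  have hKs : z ^ 2 * deriv f z / (g z * g (-z)) = P z := by
    rw [hPG z hz hz0, hG z hz0]
    field_simp
  rw [hKs]
  exact re_lt_zero_of_re_nonpos_of_isPreconnected (convex_ball 0 1).isPreconnected isOpen_ball
    hP hPle (mem_ball_self one_pos) (by simp [hP0]) hz

theorem subordination_implies_Ks (f g : ℂ → ℂ)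
    (hf : AnalyticOnNhd ℂ f (ball (0:ℂ) 1)) (hf0 : f 0 = 0) (hf1 : deriv f 0 = 1)
    (hinj : Set.InjOn f (ball (0:ℂ) 1))
    (hg : AnalyticOnNhd ℂ g (ball (0:ℂ) 1)) (hg0 : g 0 = 0) (hg1 : deriv g 0 = 1)
    (hstar : ∀ z ∈ ball (0:ℂ) 1, z ≠ 0 → 1 / 2 < (z * deriv g z / g z).re)
    (G : ℂ → ℂ)
    (hG : ∀ z : ℂ, z ≠ 0 → G z = g z * g (-z) / z) (hG0 : G 0 = 0)
    (δ : ℝ) (hδ : 0 < δ)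
    (hsub : ∀ t ∈ Set.Ioo (0:ℝ) δ, ∃ ω : ℂ → ℂ,
      AnalyticOnNhd ℂ ω (ball (0:ℂ) 1) ∧ ω 0 = 0 ∧
      (∀ z ∈ ball (0:ℂ) 1, ‖ω z‖ < 1) ∧
      (∀ z ∈ ball (0:ℂ) 1, f z + (t : ℂ) * G z = f (ω z))) :
    ∀ z ∈ ball (0:ℂ) 1, z ≠ 0 →
      (z ^ 2 * deriv f z / (g z * g (-z))).re < 0 :=
  subordination_implies_Ks_general f g hf hf1 hinj hg hg0 hg1 hstar G hG δ hδ hsub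
end
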